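/- arXiv:2504.11339 — 9 statements merged into one kernel-verified Lean document; each statement's English description precedes it below -/
import Mathlib

section
/- If λ is an eigenvalue of 𝒫⁻¹𝒜 with λ ∉ {0, 1}, then there exists a nonzero real vector x ∈ ℝⁿ with x ∉ ker B ∩ ker C such that λ = xᵀ(γBᵀQ⁻¹B + δCᵀW⁻¹C)x / xᵀ(A + γBᵀQ⁻¹B + δCᵀW⁻¹C)x; in particular 0 < λ < 1. -/
open Matrix

section helpers

variable {k : Type*} [Fintype k] [DecidableEq k]

lemma myMapDet (M : Matrix k k ℝ) :
    (M.map Complex.ofReal).det = (M.det : ℂ) := by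
  have := RingHom.map_det Complex.ofRealHom M
  exact this.symm

lemma myMapInv (M : Matrix k k ℝ) (h : IsUnit M.det) :
    (M.map Complex.ofReal)⁻¹ = M⁻¹.map Complex.ofReal := by
  apply Matrix.inv_eq_right_inv
  have h1 : (M * M⁻¹).map Complex.ofReal = (1 : Matrix k k ℝ).map Complex.ofReal := by
    rw [Matrix.mul_nonsing_inv _ h]
  have h2 : (M * M⁻¹).map Complex.ofReal
      = M.map Complex.ofReal * M⁻¹.map Complex.ofReal := by
    exact Matrix.map_mul (f := Complex.ofRealHom)
  rw [← h2, h1]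
  ext i j
  by_cases hij : i = j <;> simp [Matrix.map_apply, Matrix.one_apply, hij]

lemma myDotSym (M : Matrix k k ℝ) (hM : Mᵀ = M) (u w : k → ℝ) :
    u ⬝ᵥ M *ᵥ w = w ⬝ᵥ M *ᵥ u := by
  conv_rhs => rw [← hM]
  rw [Matrix.mulVec_transpose, Matrix.dotProduct_mulVec, dotProduct_comm]

lemma myPDdot {M : Matrix k k ℝ} (h : M.PosDef) {u : k → ℝ} (hu : u ≠ 0) :
    0 < u ⬝ᵥ M *ᵥ u := by
  have := h.dotProduct_mulVec_pos hu
  simpa [star_trivial] using this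

lemma myPSDdot {M : Matrix k k ℝ} (h : M.PosSemidef) (u : k → ℝ) :
    0 ≤ u ⬝ᵥ M *ᵥ u := by
  have := h.dotProduct_mulVec_nonneg u
  simpa [star_trivial] using this

lemma myPSDsmul {M : Matrix k k ℝ} (h : M.PosSemidef) {c : ℝ} (hc : 0 ≤ c) :
    (c • M).PosSemidef := by
  refine Matrix.PosSemidef.of_dotProduct_mulVec_nonneg ?_ ?_
  · have h1 := h.1
    unfold Matrix.IsHermitian at h1 ⊢
    rw [Matrix.conjTranspose_smul, h1, star_trivial]
  · intro u
    rw [Matrix.smul_mulVec, dotProduct_smul, smul_eq_mul]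
    exact mul_nonneg hc (h.dotProduct_mulVec_nonneg u)

lemma myConjT {k' : Type*} (M : Matrix k k' ℝ) : Mᴴ = Mᵀ := by
  ext i j; simp [Matrix.conjTranspose_apply]

lemma myMapFromColumns {k1 k2 : Type*} (f : ℝ → ℂ) (M : Matrix k k1 ℝ) (N : Matrix k k2 ℝ) :
    (fromCols M N).map f = fromCols (M.map f) (N.map f) := by
  ext i (j | j) <;> rfl

lemma myMapFromRows {k1 k2 : Type*} (f : ℝ → ℂ) (M : Matrix k1 k ℝ) (N : Matrix k2 k ℝ) :
    (fromRows M N).map f = fromRows (M.map f) (N.map f) := by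
  ext (i | i) j <;> rfl

lemma myMapNegSmul (c : ℝ) (M : Matrix k k ℝ) :
    (-(c • M)).map Complex.ofReal = -((c : ℂ) • M.map Complex.ofReal) := by
  ext i j
  simp [Matrix.map_apply]

end helpers

/-- If λ is an eigenvalue of 𝒫⁻¹𝒜 with λ ∉ {0, 1}, then there exists a nonzero real
vector x ∈ ℝⁿ with x ∉ ker B ∩ ker C such that
λ = xᵀ(γBᵀQ⁻¹B + δCᵀW⁻¹C)x / xᵀ(A + γBᵀQ⁻¹B + δCᵀW⁻¹C)x; in particular 0 < λ < 1. -/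
theorem stmt_2
    (n m l : ℕ) (hn : 0 < n) (hm : 0 < m) (hl : 0 < l)
    (A : Matrix (Fin n) (Fin n) ℝ) (hA : A.PosDef)
    (B : Matrix (Fin m) (Fin n) ℝ) (C : Matrix (Fin l) (Fin n) ℝ)
    (Q : Matrix (Fin m) (Fin m) ℝ) (hQ : Q.PosDef)
    (W : Matrix (Fin l) (Fin l) ℝ) (hW : W.PosDef)
    (γ δ : ℝ) (hγ : 0 < γ) (hδ : 0 < δ)
    (Ag : Matrix (Fin n) (Fin n) ℝ)
    (hAg : Ag = A + γ • (Bᵀ * Q⁻¹ * B) + δ • (Cᵀ * W⁻¹ * C))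
    (AA PP : Matrix (Fin n ⊕ (Fin m ⊕ Fin l)) (Fin n ⊕ (Fin m ⊕ Fin l)) ℝ)
    (hAAdef : AA = fromBlocks Ag (fromCols Bᵀ Cᵀ) (fromRows B C) 0)
    (hPPdef : PP = fromBlocks Ag (fromCols Bᵀ Cᵀ) 0
      (fromBlocks (-(γ⁻¹ • Q)) 0 0 (-(δ⁻¹ • W))))
    (lam : ℂ) (hlam0 : lam ≠ 0) (hlam1 : lam ≠ 1)
    (v : Fin n ⊕ (Fin m ⊕ Fin l) → ℂ) (hv : v ≠ 0)
    (heig : ((PP.map Complex.ofReal)⁻¹ * AA.map Complex.ofReal) *ᵥ v = lam • v) :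
    ∃ x : Fin n → ℝ, x ≠ 0 ∧ ¬(B *ᵥ x = 0 ∧ C *ᵥ x = 0) ∧
      ∃ r : ℝ,
        r = (x ⬝ᵥ (γ • (Bᵀ * Q⁻¹ * B) + δ • (Cᵀ * W⁻¹ * C)) *ᵥ x) /
            (x ⬝ᵥ (A + γ • (Bᵀ * Q⁻¹ * B) + δ • (Cᵀ * W⁻¹ * C)) *ᵥ x) ∧
        lam = (r : ℂ) ∧ 0 < r ∧ r < 1 := by
  -- the positive semidefinite "shift" matrix
  set So : Matrix (Fin n) (Fin n) ℝ := γ • (Bᵀ * Q⁻¹ * B) + δ • (Cᵀ * W⁻¹ * C) with hSo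
  have hAgS : Ag = A + So := by rw [hAg, hSo, add_assoc]
  -- positivity facts
  have hQi : (Q⁻¹).PosDef := hQ.inv
  have hWi : (W⁻¹).PosDef := hW.inv
  have hMB : (Bᵀ * Q⁻¹ * B).PosSemidef := by
    have := hQi.posSemidef.conjTranspose_mul_mul_same B
    rwa [myConjT] at this
  have hMC : (Cᵀ * W⁻¹ * C).PosSemidef := by
    have := hWi.posSemidef.conjTranspose_mul_mul_same C
    rwa [myConjT] at this
  have hSoPSD : So.PosSemidef :=
    (myPSDsmul hMB hγ.le).add (myPSDsmul hMC hδ.le)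
  have hAgPD : Ag.PosDef := by rw [hAgS]; exact hA.add_posSemidef hSoPSD
  -- determinants
  have hdetQ : IsUnit Q.det := isUnit_iff_ne_zero.mpr hQ.det_pos.ne'
  have hdetW : IsUnit W.det := isUnit_iff_ne_zero.mpr hW.det_pos.ne'
  have hdetAg : IsUnit Ag.det := isUnit_iff_ne_zero.mpr hAgPD.det_pos.ne'
  have hdetPP : IsUnit PP.det := by
    rw [hPPdef, Matrix.det_fromBlocks_zero₂₁, Matrix.det_fromBlocks_zero₂₁]
    have h1 : (-(γ⁻¹ • Q)).det ≠ 0 := by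
      rw [← neg_smul, Matrix.det_smul]
      exact mul_ne_zero (pow_ne_zero _ (by simp [hγ.ne'])) hQ.det_pos.ne'
    have h2 : (-(δ⁻¹ • W)).det ≠ 0 := by
      rw [← neg_smul, Matrix.det_smul]
      exact mul_ne_zero (pow_ne_zero _ (by simp [hδ.ne'])) hW.det_pos.ne'
    exact hdetAg.mul ((isUnit_iff_ne_zero.mpr h1).mul (isUnit_iff_ne_zero.mpr h2))
  have hdetPP' : IsUnit (PP.map Complex.ofReal).det := by
    rw [myMapDet]
    exact isUnit_iff_ne_zero.mpr (by exact_mod_cast (isUnit_iff_ne_zero.mp hdetPP))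
  -- undo the inverse in the eigenvalue equation
  have hmv : (AA.map Complex.ofReal) *ᵥ v = lam • ((PP.map Complex.ofReal) *ᵥ v) := by
    have h1 := congrArg (fun u => (PP.map Complex.ofReal) *ᵥ u) heig
    simp only [Matrix.mulVec_mulVec, Matrix.mulVec_smul] at h1
    rwa [← Matrix.mul_assoc, Matrix.mul_nonsing_inv _ hdetPP', Matrix.one_mul] at h1
  -- block structure over ℂ
  have h0a : (0 : Matrix (Fin m ⊕ Fin l) (Fin m ⊕ Fin l) ℝ).map Complex.ofReal = 0 := by
    ext i j; simp
  have h0b : (0 : Matrix (Fin m ⊕ Fin l) (Fin n) ℝ).map Complex.ofReal = 0 := by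
    ext i j; simp
  have h0c : (0 : Matrix (Fin m) (Fin l) ℝ).map Complex.ofReal = 0 := by
    ext i j; simp
  have h0d : (0 : Matrix (Fin l) (Fin m) ℝ).map Complex.ofReal = 0 := by
    ext i j; simp
  have hAA' : AA.map Complex.ofReal
      = fromBlocks (Ag.map Complex.ofReal)
        (fromCols (B.map Complex.ofReal)ᵀ (C.map Complex.ofReal)ᵀ)
        (fromRows (B.map Complex.ofReal) (C.map Complex.ofReal)) 0 := by
    rw [hAAdef, Matrix.fromBlocks_map, myMapFromColumns, myMapFromRows,
      Matrix.transpose_map, Matrix.transpose_map, h0a]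
  have hPP' : PP.map Complex.ofReal
      = fromBlocks (Ag.map Complex.ofReal)
        (fromCols (B.map Complex.ofReal)ᵀ (C.map Complex.ofReal)ᵀ) 0
        (fromBlocks (-(((γ : ℂ))⁻¹ • Q.map Complex.ofReal)) 0 0
          (-(((δ : ℂ))⁻¹ • W.map Complex.ofReal))) := by
    rw [hPPdef, Matrix.fromBlocks_map, myMapFromColumns, Matrix.transpose_map,
      Matrix.transpose_map, Matrix.fromBlocks_map, myMapNegSmul, myMapNegSmul,
      h0b, h0c, h0d, Complex.ofReal_inv, Complex.ofReal_inv]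
  -- components of v
  set x : Fin n → ℂ := fun i => v (Sum.inl i) with hx
  set y : Fin m → ℂ := fun j => v (Sum.inr (Sum.inl j)) with hy
  set z : Fin l → ℂ := fun j => v (Sum.inr (Sum.inr j)) with hz
  have hvinl : v ∘ Sum.inl = x := rfl
  have hvelim : v ∘ Sum.inr = Sum.elim y z := by
    funext j; rcases j with j | j <;> rfl
  rw [hAA', hPP', Matrix.fromBlocks_mulVec, Matrix.fromBlocks_mulVec,
    hvinl, hvelim] at hmv
  simp only [Matrix.fromBlocks_mulVec, Matrix.fromCols_mulVec_sumElim,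
    Matrix.fromRows_mulVec, Matrix.zero_mulVec, add_zero, zero_add,
    Matrix.mulVec_zero] at hmv
  have E1 : (Ag.map Complex.ofReal) *ᵥ x
        + ((B.map Complex.ofReal)ᵀ *ᵥ y + (C.map Complex.ofReal)ᵀ *ᵥ z)
      = lam • ((Ag.map Complex.ofReal) *ᵥ x
        + ((B.map Complex.ofReal)ᵀ *ᵥ y + (C.map Complex.ofReal)ᵀ *ᵥ z)) :=
    funext fun i => congrFun hmv (Sum.inl i)
  have E2 : (B.map Complex.ofReal) *ᵥ x
      = lam • ((-(((γ : ℂ))⁻¹ • Q.map Complex.ofReal)) *ᵥ y) :=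
    funext fun j => congrFun hmv (Sum.inr (Sum.inl j))
  have E3 : (C.map Complex.ofReal) *ᵥ x
      = lam • ((-(((δ : ℂ))⁻¹ • W.map Complex.ofReal)) *ᵥ z) :=
    funext fun j => congrFun hmv (Sum.inr (Sum.inr j))
  have hdetQ' : IsUnit (Q.map Complex.ofReal).det := by
    rw [myMapDet]; exact isUnit_iff_ne_zero.mpr (by exact_mod_cast isUnit_iff_ne_zero.mp hdetQ)
  have hdetW' : IsUnit (W.map Complex.ofReal).det := by
    rw [myMapDet]; exact isUnit_iff_ne_zero.mpr (by exact_mod_cast isUnit_iff_ne_zero.mp hdetW)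
  have hγc : ((γ : ℂ)) ≠ 0 := by exact_mod_cast hγ.ne'
  have hδc : ((δ : ℂ)) ≠ 0 := by exact_mod_cast hδ.ne'
  -- solve for y and z
  have E2' : (B.map Complex.ofReal) *ᵥ x
      = (-(lam * ((γ : ℂ))⁻¹)) • ((Q.map Complex.ofReal) *ᵥ y) := by
    rw [E2, Matrix.neg_mulVec, Matrix.smul_mulVec, smul_neg, smul_smul, neg_smul]
  have E3' : (C.map Complex.ofReal) *ᵥ x
      = (-(lam * ((δ : ℂ))⁻¹)) • ((W.map Complex.ofReal) *ᵥ z) := by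
    rw [E3, Matrix.neg_mulVec, Matrix.smul_mulVec, smul_neg, smul_smul, neg_smul]
  have hyx : y = (-((γ : ℂ) / lam)) • ((Q.map Complex.ofReal)⁻¹ *ᵥ ((B.map Complex.ofReal) *ᵥ x)) := by
    have h0 : (Q.map Complex.ofReal)⁻¹ *ᵥ ((-(lam * ((γ : ℂ))⁻¹)) • ((Q.map Complex.ofReal) *ᵥ y))
        = (-(lam * ((γ : ℂ))⁻¹)) • y := by
      rw [Matrix.mulVec_smul, Matrix.mulVec_mulVec, Matrix.nonsing_inv_mul _ hdetQ',
        Matrix.one_mulVec]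
    have h1 : (Q.map Complex.ofReal)⁻¹ *ᵥ ((B.map Complex.ofReal) *ᵥ x)
        = (-(lam * ((γ : ℂ))⁻¹)) • y := by
      rw [E2', h0]
    rw [h1, smul_smul]
    have h2 : (-((γ : ℂ) / lam)) * (-(lam * ((γ : ℂ))⁻¹)) = 1 := by
      field_simp
    rw [h2, one_smul]
  have hzx : z = (-((δ : ℂ) / lam)) • ((W.map Complex.ofReal)⁻¹ *ᵥ ((C.map Complex.ofReal) *ᵥ x)) := by
    have h0 : (W.map Complex.ofReal)⁻¹ *ᵥ ((-(lam * ((δ : ℂ))⁻¹)) • ((W.map Complex.ofReal) *ᵥ z))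
        = (-(lam * ((δ : ℂ))⁻¹)) • z := by
      rw [Matrix.mulVec_smul, Matrix.mulVec_mulVec, Matrix.nonsing_inv_mul _ hdetW',
        Matrix.one_mulVec]
    have h1 : (W.map Complex.ofReal)⁻¹ *ᵥ ((C.map Complex.ofReal) *ᵥ x)
        = (-(lam * ((δ : ℂ))⁻¹)) • z := by
      rw [E3', h0]
    rw [h1, smul_smul]
    have h2 : (-((δ : ℂ) / lam)) * (-(lam * ((δ : ℂ))⁻¹)) = 1 := by
      field_simp
    rw [h2, one_smul]
  -- x is nonzero
  have hx0 : x ≠ 0 := by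
    intro h0
    apply hv
    have hy0 : y = 0 := by rw [hyx, h0]; simp
    have hz0 : z = 0 := by rw [hzx, h0]; simp
    funext i
    rcases i with i | (j | j)
    · exact congrFun h0 i
    · exact congrFun hy0 j
    · exact congrFun hz0 j
  -- the reduced eigenvalue equation over ℂ
  have ht : (Ag.map Complex.ofReal) *ᵥ x
      + ((B.map Complex.ofReal)ᵀ *ᵥ y + (C.map Complex.ofReal)ᵀ *ᵥ z) = 0 := by
    have h2 : (1 - lam) • ((Ag.map Complex.ofReal) *ᵥ x
        + ((B.map Complex.ofReal)ᵀ *ᵥ y + (C.map Complex.ofReal)ᵀ *ᵥ z)) = 0 := by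
      rw [sub_smul, one_smul, ← E1, sub_self]
    rcases smul_eq_zero.mp h2 with h | h
    · exact absurd (sub_eq_zero.mp h).symm hlam1
    · exact h
  have hyB : (B.map Complex.ofReal)ᵀ *ᵥ y
      = (-((γ : ℂ) / lam)) • (((B.map Complex.ofReal)ᵀ * (Q.map Complex.ofReal)⁻¹
          * (B.map Complex.ofReal)) *ᵥ x) := by
    rw [hyx, Matrix.mulVec_smul, Matrix.mulVec_mulVec, Matrix.mulVec_mulVec]
  have hzC : (C.map Complex.ofReal)ᵀ *ᵥ z
      = (-((δ : ℂ) / lam)) • (((C.map Complex.ofReal)ᵀ * (W.map Complex.ofReal)⁻¹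
          * (C.map Complex.ofReal)) *ᵥ x) := by
    rw [hzx, Matrix.mulVec_smul, Matrix.mulVec_mulVec, Matrix.mulVec_mulVec]
  have hSmap : So.map Complex.ofReal
      = (γ : ℂ) • ((B.map Complex.ofReal)ᵀ * (Q.map Complex.ofReal)⁻¹ * (B.map Complex.ofReal))
        + (δ : ℂ) • ((C.map Complex.ofReal)ᵀ * (W.map Complex.ofReal)⁻¹ * (C.map Complex.ofReal)) := by
    have hmulB : (Bᵀ * Q⁻¹ * B).map Complex.ofReal
        = (Bᵀ.map Complex.ofReal) * ((Q⁻¹).map Complex.ofReal) * (B.map Complex.ofReal) := by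
      have h1 : ((Bᵀ * Q⁻¹) * B).map Complex.ofReal
          = ((Bᵀ * Q⁻¹).map Complex.ofReal) * (B.map Complex.ofReal) :=
        Matrix.map_mul (f := Complex.ofRealHom)
      have h2 : (Bᵀ * Q⁻¹).map Complex.ofReal
          = (Bᵀ.map Complex.ofReal) * ((Q⁻¹).map Complex.ofReal) :=
        Matrix.map_mul (f := Complex.ofRealHom)
      rw [h1, h2]
    have hmulC : (Cᵀ * W⁻¹ * C).map Complex.ofReal
        = (Cᵀ.map Complex.ofReal) * ((W⁻¹).map Complex.ofReal) * (C.map Complex.ofReal) := by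
      have h1 : ((Cᵀ * W⁻¹) * C).map Complex.ofReal
          = ((Cᵀ * W⁻¹).map Complex.ofReal) * (C.map Complex.ofReal) :=
        Matrix.map_mul (f := Complex.ofRealHom)
      have h2 : (Cᵀ * W⁻¹).map Complex.ofReal
          = (Cᵀ.map Complex.ofReal) * ((W⁻¹).map Complex.ofReal) :=
        Matrix.map_mul (f := Complex.ofRealHom)
      rw [h1, h2]
    have haddmap : So.map Complex.ofReal
        = (γ : ℂ) • ((Bᵀ * Q⁻¹ * B).map Complex.ofReal)
          + (δ : ℂ) • ((Cᵀ * W⁻¹ * C).map Complex.ofReal) := by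
      rw [hSo]; ext i j
      simp [Matrix.map_apply, Matrix.add_apply, Matrix.smul_apply, smul_eq_mul]
    rw [haddmap, hmulB, hmulC, Matrix.transpose_map, Matrix.transpose_map,
      myMapInv Q hdetQ, myMapInv W hdetW]
  have key : lam • ((Ag.map Complex.ofReal) *ᵥ x) = (So.map Complex.ofReal) *ᵥ x := by
    rw [hyB, hzC] at ht
    have h3 : (Ag.map Complex.ofReal) *ᵥ x
        = ((γ : ℂ) / lam) • (((B.map Complex.ofReal)ᵀ * (Q.map Complex.ofReal)⁻¹
            * (B.map Complex.ofReal)) *ᵥ x)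
        + ((δ : ℂ) / lam) • (((C.map Complex.ofReal)ᵀ * (W.map Complex.ofReal)⁻¹
            * (C.map Complex.ofReal)) *ᵥ x) := by
      have h4 := eq_neg_of_add_eq_zero_left ht
      rw [h4]; simp [neg_add, neg_smul]; abel
    rw [hSmap, Matrix.add_mulVec, Matrix.smul_mulVec, Matrix.smul_mulVec, h3,
      smul_add, smul_smul, smul_smul]
    have e1 : lam * ((γ : ℂ) / lam) = (γ : ℂ) := by field_simp
    have e2 : lam * ((δ : ℂ) / lam) = (δ : ℂ) := by field_simp
    rw [e1, e2]
  -- real and imaginary parts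
  set p := lam.re with hpdef
  set q := lam.im with hqdef
  set a : Fin n → ℝ := fun i => (x i).re with haDef
  set b : Fin n → ℝ := fun i => (x i).im with hbDef
  have Hre : p • (Ag *ᵥ a) - q • (Ag *ᵥ b) = So *ᵥ a := by
    funext i
    have h := congrFun key i
    have hr := congrArg Complex.re h
    simp only [Pi.smul_apply, smul_eq_mul, Matrix.mulVec, dotProduct, Matrix.map_apply,
      Complex.mul_re, Complex.re_sum, Complex.im_sum, Complex.mul_im,
      Complex.ofReal_re, Complex.ofReal_im, zero_mul, mul_zero, sub_zero, add_zero,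
      zero_add] at hr
    simpa [Matrix.mulVec, dotProduct, haDef, hbDef] using hr
  have Him : p • (Ag *ᵥ b) + q • (Ag *ᵥ a) = So *ᵥ b := by
    funext i
    have h := congrFun key i
    have hr := congrArg Complex.im h
    simp only [Pi.smul_apply, smul_eq_mul, Matrix.mulVec, dotProduct, Matrix.map_apply,
      Complex.mul_re, Complex.re_sum, Complex.im_sum, Complex.mul_im,
      Complex.ofReal_re, Complex.ofReal_im, zero_mul, mul_zero, sub_zero, add_zero,
      zero_add] at hr
    simpa [Matrix.mulVec, dotProduct, haDef, hbDef] using hr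
  -- the imaginary part of lam vanishes
  have hposab : 0 < a ⬝ᵥ Ag *ᵥ a + b ⬝ᵥ Ag *ᵥ b := by
    have hab : a ≠ 0 ∨ b ≠ 0 := by
      by_contra hcon
      push_neg at hcon
      apply hx0
      funext i
      exact Complex.ext (by simpa [haDef] using congrFun hcon.1 i)
        (by simpa [hbDef] using congrFun hcon.2 i)
    rcases hab with h | h
    · exact add_pos_of_pos_of_nonneg (myPDdot hAgPD h) (myPSDdot hAgPD.posSemidef b)
    · exact add_pos_of_nonneg_of_pos (myPSDdot hAgPD.posSemidef a) (myPDdot hAgPD h)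
  have hAgT : Agᵀ = Ag := by have := hAgPD.1.eq; rwa [myConjT] at this
  have hSoT : Soᵀ = So := by have := hSoPSD.1.eq; rwa [myConjT] at this
  have h1 : p * (b ⬝ᵥ Ag *ᵥ a) - q * (b ⬝ᵥ Ag *ᵥ b) = b ⬝ᵥ So *ᵥ a := by
    have := congrArg (fun u => b ⬝ᵥ u) Hre
    simpa [dotProduct_sub, dotProduct_smul, smul_eq_mul] using this
  have h2 : p * (a ⬝ᵥ Ag *ᵥ b) + q * (a ⬝ᵥ Ag *ᵥ a) = a ⬝ᵥ So *ᵥ b := by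
    have := congrArg (fun u => a ⬝ᵥ u) Him
    simpa [dotProduct_add, dotProduct_smul, smul_eq_mul] using this
  rw [myDotSym Ag hAgT b a, myDotSym So hSoT b a] at h1
  have h3 : q * (a ⬝ᵥ Ag *ᵥ a + b ⬝ᵥ Ag *ᵥ b) = 0 := by ring_nf; ring_nf at h1 h2; linarith
  have hq0 : q = 0 := (mul_eq_zero.mp h3).resolve_right hposab.ne'
  have hlamp : lam = (p : ℂ) :=
    Complex.ext (by rw [Complex.ofReal_re]) (by rw [Complex.ofReal_im, ← hqdef, hq0])
  have hp0 : p ≠ 0 := by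
    intro h
    exact hlam0 (by rw [hlamp, h, Complex.ofReal_zero])
  have Hre' : p • (Ag *ᵥ a) = So *ᵥ a := by rw [← Hre, hq0]; simp
  have Him' : p • (Ag *ᵥ b) = So *ᵥ b := by rw [← Him, hq0]; simp
  obtain ⟨w, hw0, hweq⟩ : ∃ w : Fin n → ℝ, w ≠ 0 ∧ p • (Ag *ᵥ w) = So *ᵥ w := by
    by_cases hA0 : a = 0
    · refine ⟨b, ?_, Him'⟩
      intro hb0
      apply hx0
      funext i
      exact Complex.ext (by simpa [haDef] using congrFun hA0 i)
        (by simpa [hbDef] using congrFun hb0 i)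
    · exact ⟨a, hA0, Hre'⟩
  -- conclude
  have hdw : 0 < w ⬝ᵥ Ag *ᵥ w := myPDdot hAgPD hw0
  have hpd : p * (w ⬝ᵥ Ag *ᵥ w) = w ⬝ᵥ So *ᵥ w := by
    have := congrArg (fun u => w ⬝ᵥ u) hweq
    simpa [dotProduct_smul, smul_eq_mul] using this
  have hBq : w ⬝ᵥ (Bᵀ * Q⁻¹ * B) *ᵥ w = (B *ᵥ w) ⬝ᵥ Q⁻¹ *ᵥ (B *ᵥ w) := by
    rw [← Matrix.mulVec_mulVec, ← Matrix.mulVec_mulVec, Matrix.dotProduct_mulVec w Bᵀ,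
      Matrix.vecMul_transpose]
  have hCq : w ⬝ᵥ (Cᵀ * W⁻¹ * C) *ᵥ w = (C *ᵥ w) ⬝ᵥ W⁻¹ *ᵥ (C *ᵥ w) := by
    rw [← Matrix.mulVec_mulVec, ← Matrix.mulVec_mulVec, Matrix.dotProduct_mulVec w Cᵀ,
      Matrix.vecMul_transpose]
  have hSw : w ⬝ᵥ So *ᵥ w
      = γ * ((B *ᵥ w) ⬝ᵥ Q⁻¹ *ᵥ (B *ᵥ w)) + δ * ((C *ᵥ w) ⬝ᵥ W⁻¹ *ᵥ (C *ᵥ w)) := by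
    rw [hSo, Matrix.add_mulVec, dotProduct_add, Matrix.smul_mulVec,
      Matrix.smul_mulVec, dotProduct_smul, dotProduct_smul, smul_eq_mul, smul_eq_mul,
      hBq, hCq]
  have hBC : ¬(B *ᵥ w = 0 ∧ C *ᵥ w = 0) := by
    rintro ⟨hb1, hb2⟩
    apply hp0
    have hz : w ⬝ᵥ So *ᵥ w = 0 := by rw [hSw, hb1, hb2]; simp
    exact (mul_eq_zero.mp (hpd.trans hz)).resolve_right hdw.ne'
  have hswpos : 0 < w ⬝ᵥ So *ᵥ w := by
    rw [hSw]
    rcases eq_or_ne (B *ᵥ w) 0 with hB0 | hB0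
    · have hC0 : C *ᵥ w ≠ 0 := fun h => hBC ⟨hB0, h⟩
      exact add_pos_of_nonneg_of_pos (mul_nonneg hγ.le (myPSDdot hQi.posSemidef _))
        (mul_pos hδ (myPDdot hWi hC0))
    · exact add_pos_of_pos_of_nonneg (mul_pos hγ (myPDdot hQi hB0))
        (mul_nonneg hδ.le (myPSDdot hWi.posSemidef _))
  have hpeq : p = (w ⬝ᵥ So *ᵥ w) / (w ⬝ᵥ Ag *ᵥ w) := by
    rw [eq_div_iff hdw.ne']; exact hpd
  have hppos : 0 < p := by rw [hpeq]; exact div_pos hswpos hdw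
  have hplt : p < 1 := by
    have hwa := myPDdot hA hw0
    have hdwsplit : w ⬝ᵥ Ag *ᵥ w = w ⬝ᵥ A *ᵥ w + w ⬝ᵥ So *ᵥ w := by
      rw [hAgS, Matrix.add_mulVec, dotProduct_add]
    rw [hpeq, div_lt_one hdw]
    linarith
  refine ⟨w, hw0, hBC, p, ?_, hlamp, hppos, hplt⟩
  rw [← hAg]
  exact hpeq
end

section
/- Let (x; y; z) ≠ 0 be an eigenvector of 𝒫⁻¹𝒜 with eigenvalue λ, i.e. 𝒜(x;y;z) = λ·𝒫(x;y;z). If λ ≠ 0 then x ≠ 0; if moreover λ ∉ {0, 1} then x ∉ ker B ∩ ker C. -/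
open Matrix

lemma myFromColumns_map {m n₁ n₂ : Type*} (M : Matrix m n₁ ℝ) (N : Matrix m n₂ ℝ) :
    (fromCols M N).map Complex.ofReal
      = fromCols (M.map Complex.ofReal) (N.map Complex.ofReal) := by
  ext i j; cases j <;> rfl

lemma myFromRows_map {m₁ m₂ n : Type*} (M : Matrix m₁ n ℝ) (N : Matrix m₂ n ℝ) :
    (fromRows M N).map Complex.ofReal
      = fromRows (M.map Complex.ofReal) (N.map Complex.ofReal) := by
  ext i j; cases i <;> rfl

lemma mySmulPSD {k : Type*} [Fintype k] {M : Matrix k k ℝ} (hM : M.PosSemidef)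
    {c : ℝ} (hc : 0 ≤ c) : (c • M).PosSemidef := by
  refine ⟨by simp only [Matrix.IsHermitian, conjTranspose_smul, hM.1.eq, star_trivial], fun v => ?_⟩
  exact (hM.smul hc).2 v

lemma myMapKer {k : Type*} [Fintype k] [DecidableEq k] {M : Matrix k k ℝ}
    (hM : M.det ≠ 0) {v : k → ℂ} (h : (M.map Complex.ofReal) *ᵥ v = 0) : v = 0 := by
  have hdet : IsUnit (M.map Complex.ofReal).det := by
    have : (M.map Complex.ofReal).det = (M.det : ℂ) := by
      rw [show M.map Complex.ofReal = Complex.ofRealHom.mapMatrix M from rfl,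
        ← RingHom.map_det]; rfl
    rw [this]
    exact isUnit_iff_ne_zero.mpr (by exact_mod_cast hM)
  have hinj := Matrix.mulVec_injective_iff_isUnit.mpr
    ((Matrix.isUnit_iff_isUnit_det _).mpr hdet)
  apply hinj
  simp [h]

/-- Let (x; y; z) ≠ 0 be an eigenvector of 𝒫⁻¹𝒜 with eigenvalue λ, i.e.
𝒜(x;y;z) = λ·𝒫(x;y;z). If λ ≠ 0 then x ≠ 0; if moreover λ ∉ {0, 1} then
x ∉ ker B ∩ ker C. -/
theorem stmt_3
    (n m l : ℕ) (hn : 0 < n) (hm : 0 < m) (hl : 0 < l)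
    (A : Matrix (Fin n) (Fin n) ℝ) (hA : A.PosDef)
    (B : Matrix (Fin m) (Fin n) ℝ) (C : Matrix (Fin l) (Fin n) ℝ)
    (Q : Matrix (Fin m) (Fin m) ℝ) (hQ : Q.PosDef)
    (W : Matrix (Fin l) (Fin l) ℝ) (hW : W.PosDef)
    (γ δ : ℝ) (hγ : 0 < γ) (hδ : 0 < δ)
    (Ag : Matrix (Fin n) (Fin n) ℝ)
    (hAg : Ag = A + γ • (Bᵀ * Q⁻¹ * B) + δ • (Cᵀ * W⁻¹ * C))
    (AA PP : Matrix (Fin n ⊕ (Fin m ⊕ Fin l)) (Fin n ⊕ (Fin m ⊕ Fin l)) ℝ)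
    (hAAdef : AA = fromBlocks Ag (fromCols Bᵀ Cᵀ) (fromRows B C) 0)
    (hPPdef : PP = fromBlocks Ag (fromCols Bᵀ Cᵀ) 0
      (fromBlocks (-(γ⁻¹ • Q)) 0 0 (-(δ⁻¹ • W))))
    (lam : ℂ) (x : Fin n → ℂ) (y : Fin m → ℂ) (z : Fin l → ℂ)
    (hw : Sum.elim x (Sum.elim y z) ≠ 0)
    (heig : (AA.map Complex.ofReal) *ᵥ Sum.elim x (Sum.elim y z)
        = lam • ((PP.map Complex.ofReal) *ᵥ Sum.elim x (Sum.elim y z))) :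
    (lam ≠ 0 → x ≠ 0) ∧
    (lam ≠ 0 → lam ≠ 1 →
      ¬((B.map Complex.ofReal) *ᵥ x = 0 ∧ (C.map Complex.ofReal) *ᵥ x = 0)) := by
  -- Positive definiteness of Ag
  have hAgpd : Ag.PosDef := by
    rw [hAg]
    refine (hA.add_posSemidef ?_).add_posSemidef ?_
    · refine mySmulPSD ?_ hγ.le
      have := hQ.inv.posSemidef.conjTranspose_mul_mul_same B
      simpa [conjTranspose_eq_transpose_of_trivial] using this
    · refine mySmulPSD ?_ hδ.le
      have := hW.inv.posSemidef.conjTranspose_mul_mul_same C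
      simpa [conjTranspose_eq_transpose_of_trivial] using this
  have hQdet : (-(γ⁻¹ • Q)).det ≠ 0 := by
    have : ((-γ⁻¹) • Q).det ≠ 0 := by
      rw [Matrix.det_smul]
      exact mul_ne_zero (pow_ne_zero _ (neg_ne_zero.mpr (inv_ne_zero hγ.ne'))) hQ.det_pos.ne'
    simpa [neg_smul] using this
  have hWdet : (-(δ⁻¹ • W)).det ≠ 0 := by
    have : ((-δ⁻¹) • W).det ≠ 0 := by
      rw [Matrix.det_smul]
      exact mul_ne_zero (pow_ne_zero _ (neg_ne_zero.mpr (inv_ne_zero hδ.ne'))) hW.det_pos.ne'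
    simpa [neg_smul] using this
  subst hAAdef hPPdef
  simp only [fromBlocks_map, myFromColumns_map, myFromRows_map, Matrix.map_zero _ Complex.ofReal_zero,
    fromBlocks_mulVec, fromRows_mulVec, fromCols_mulVec_sumElim, zero_mulVec,
    Matrix.zero_mulVec, add_zero, zero_add, Sum.elim_comp_inl, Sum.elim_comp_inr] at heig
  have hpt := funext_iff.mp heig
  -- block equations
  have e1 : (Ag.map Complex.ofReal) *ᵥ x + ((Bᵀ.map Complex.ofReal) *ᵥ y + (Cᵀ.map Complex.ofReal) *ᵥ z)
      = lam • ((Ag.map Complex.ofReal) *ᵥ x + ((Bᵀ.map Complex.ofReal) *ᵥ y + (Cᵀ.map Complex.ofReal) *ᵥ z)) := by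
    funext i; exact hpt (Sum.inl i)
  have e2 : (B.map Complex.ofReal) *ᵥ x
      = lam • (((-(γ⁻¹ • Q)).map Complex.ofReal) *ᵥ y) := by
    funext i; exact hpt (Sum.inr (Sum.inl i))
  have e3 : (C.map Complex.ofReal) *ᵥ x
      = lam • (((-(δ⁻¹ • W)).map Complex.ofReal) *ᵥ z) := by
    funext i; exact hpt (Sum.inr (Sum.inr i))
  -- Key: if lam ≠ 0 and Bx = 0, Cx = 0 then y = 0 and z = 0
  have key : ∀ (_ : lam ≠ 0), (B.map Complex.ofReal) *ᵥ x = 0 → (C.map Complex.ofReal) *ᵥ x = 0 →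
      y = 0 ∧ z = 0 := by
    intro hlam hBx hCx
    constructor
    · refine myMapKer hQdet ?_
      have := e2.symm.trans hBx
      exact (smul_eq_zero.mp this).resolve_left hlam
    · refine myMapKer hWdet ?_
      have := e3.symm.trans hCx
      exact (smul_eq_zero.mp this).resolve_left hlam
  constructor
  · intro hlam hx
    subst hx
    have hBx : (B.map Complex.ofReal) *ᵥ (0 : Fin n → ℂ) = 0 := by simp
    obtain ⟨hy, hz⟩ := key hlam (by simp) (by simp)
    exact hw (by simp [hy, hz])
  · rintro hlam hlam1 ⟨hBx, hCx⟩
    obtain ⟨hy, hz⟩ := key hlam hBx hCx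
    subst hy; subst hz
    simp only [Matrix.mulVec_zero, add_zero] at e1
    have : (1 - lam) • ((Ag.map Complex.ofReal) *ᵥ x) = 0 := by
      rw [sub_smul, one_smul, ← e1]; simp
    have hAgx : (Ag.map Complex.ofReal) *ᵥ x = 0 := by
      rcases smul_eq_zero.mp this with h | h
      · exact absurd (by linear_combination -h : lam = 1) hlam1
      · exact h
    have hx : x = 0 := myMapKer hAgpd.det_pos.ne' hAgx
    exact hw (by simp [hx])
end

section
/- Let λ ∈ ℝ satisfy λ < λmin(Ã) or λ > λmax(Ã), where λmin(Ã) and λmax(Ã) are the smallest and largest eigenvalues of Ã (so that Ã − λI is invertible). Then for every nonzero z ∈ ℝⁿ there exists a nonzero s ∈ ℝⁿ such that zᵀ(Ã − λI)⁻¹z / zᵀz = (sᵀÃs / sᵀs − λ)⁻¹. -/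
open Matrix

/-- Inverse is antitone on each sign class. -/
lemma inv_antitone_aux {a b : ℝ} (hab : a ≤ b) (h : 0 < a ∨ b < 0) : b⁻¹ ≤ a⁻¹ := by
  rcases h with h | h
  · exact inv_anti₀ h hab
  · have h1 : (0:ℝ) < -b := by linarith
    have h2 : -b ≤ -a := by linarith
    have := inv_anti₀ h1 h2
    rw [inv_neg, inv_neg] at this
    linarith

/-- A division bound lemma. -/
lemma div_bounds_aux {m M t s : ℝ} (hs : 0 < s) (hsign : 0 < m ∨ M < 0)
    (hmM : m ≤ M) (h1 : M⁻¹ * s ≤ t) (h2 : t ≤ m⁻¹ * s) :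
    t ≠ 0 ∧ m ≤ s / t ∧ s / t ≤ M := by
  rcases hsign with hm | hM
  · have hM0 : 0 < M := lt_of_lt_of_le hm hmM
    have ht : 0 < t := lt_of_lt_of_le (by positivity) h1
    refine ⟨ne_of_gt ht, ?_, ?_⟩
    · rw [le_div_iff₀ ht]
      have := mul_le_mul_of_nonneg_left h2 (le_of_lt hm)
      rw [← mul_assoc, mul_inv_cancel₀ (ne_of_gt hm), one_mul] at this
      linarith
    · rw [div_le_iff₀ ht]
      have := mul_le_mul_of_nonneg_left h1 (le_of_lt hM0)
      rw [← mul_assoc, mul_inv_cancel₀ (ne_of_gt hM0), one_mul] at this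
      linarith
  · have hm0 : m < 0 := lt_of_le_of_lt hmM hM
    have hminv : m⁻¹ < 0 := inv_lt_zero.mpr hm0
    have ht : t < 0 := lt_of_le_of_lt h2 (by
      have := mul_pos (neg_pos.mpr hminv) hs
      nlinarith)
    refine ⟨ne_of_lt ht, ?_, ?_⟩
    · rw [le_div_iff_of_neg ht]
      have := mul_le_mul_of_nonpos_left h2 (le_of_lt hm0)
      rw [← mul_assoc, mul_inv_cancel₀ (ne_of_lt hm0), one_mul] at this
      linarith
    · rw [div_le_iff_of_neg ht]
      have := mul_le_mul_of_nonpos_left h1 (le_of_lt hM)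
      rw [← mul_assoc, mul_inv_cancel₀ (ne_of_lt hM), one_mul] at this
      linarith

/-- Let λ ∈ ℝ satisfy λ < λmin(Ã) or λ > λmax(Ã). Then for every nonzero z ∈ ℝⁿ
there exists a nonzero s ∈ ℝⁿ such that
zᵀ(Ã − λI)⁻¹z / zᵀz = (sᵀÃs / sᵀs − λ)⁻¹. -/
theorem stmt_12
    (n : ℕ) (hn : 0 < n)
    (Atil : Matrix (Fin n) (Fin n) ℝ) (hA : Atil.IsHermitian)
    (lam : ℝ)
    (hlam : (∀ i, lam < hA.eigenvalues i) ∨ (∀ i, hA.eigenvalues i < lam)) :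
    ∀ z : Fin n → ℝ, z ≠ 0 → ∃ s : Fin n → ℝ, s ≠ 0 ∧
      (z ⬝ᵥ (Atil - lam • (1 : Matrix (Fin n) (Fin n) ℝ))⁻¹ *ᵥ z) / (z ⬝ᵥ z)
        = ((s ⬝ᵥ Atil *ᵥ s) / (s ⬝ᵥ s) - lam)⁻¹ := by
  intro z hz
  classical
  have hne : Nonempty (Fin n) := Fin.pos_iff_nonempty.mp hn
  set eig : Fin n → ℝ := hA.eigenvalues with heig
  set U : Matrix (Fin n) (Fin n) ℝ := (hA.eigenvectorUnitary : Matrix (Fin n) (Fin n) ℝ)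
    with hUdef
  have hUU : U * star U = 1 := (Matrix.mem_unitaryGroup_iff).mp hA.eigenvectorUnitary.2
  have hUU' : star U * U = 1 := (Matrix.mem_unitaryGroup_iff').mp hA.eigenvectorUnitary.2
  have hAeq : Atil = U * diagonal eig * star U := by
    have := hA.spectral_theorem
    simpa using this
  have hnz : ∀ i, eig i - lam ≠ 0 := by
    intro i
    rcases hlam with h | h
    · exact ne_of_gt (by linarith [h i])
    · exact ne_of_lt (by linarith [h i])
  -- key computation lemma
  have key : ∀ (x : Fin n → ℝ) (d : Fin n → ℝ),
      x ⬝ᵥ (U * diagonal d * star U) *ᵥ x = ∑ i, d i * ((star U *ᵥ x) i) ^ 2 := by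
    intro x d
    rw [← mulVec_mulVec, ← mulVec_mulVec, dotProduct_mulVec]
    have hv : vecMul x U = star U *ᵥ x := by
      have hsU : star U = Uᵀ := by
        ext i j
        simp [star_eq_conjTranspose, conjTranspose_apply]
      rw [hsU, mulVec_transpose]
    rw [hv]
    simp only [dotProduct, mulVec_diagonal]
    exact Finset.sum_congr rfl fun i _ => by ring
  have hxx : ∀ x : Fin n → ℝ, x ⬝ᵥ x = ∑ i, ((star U *ᵥ x) i) ^ 2 := by
    intro x
    have h1 : x ⬝ᵥ x = x ⬝ᵥ (U * diagonal (fun _ => (1:ℝ)) * star U) *ᵥ x := by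
      rw [show diagonal (fun _ => (1:ℝ)) = (1 : Matrix (Fin n) (Fin n) ℝ) from diagonal_one]
      rw [mul_one, hUU, one_mulVec]
    rw [h1, key]
    simp
  -- inverse matrix
  have hMeq : Atil - lam • (1 : Matrix (Fin n) (Fin n) ℝ)
      = U * diagonal (fun i => eig i - lam) * star U := by
    have hone : lam • (1 : Matrix (Fin n) (Fin n) ℝ)
        = U * (lam • (1 : Matrix (Fin n) (Fin n) ℝ)) * star U := by
      rw [Matrix.mul_smul, Matrix.smul_mul, mul_one, hUU]
    have hdiag : diagonal eig - lam • (1 : Matrix (Fin n) (Fin n) ℝ)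
        = diagonal (fun i => eig i - lam) := by
      ext i j
      by_cases h : i = j <;>
        simp [Matrix.diagonal_apply, Matrix.one_apply, h]
    rw [hAeq]
    conv_lhs => rw [hone]
    rw [← Matrix.sub_mul, ← Matrix.mul_sub, hdiag]
  have hinv : (Atil - lam • (1 : Matrix (Fin n) (Fin n) ℝ))⁻¹
      = U * diagonal (fun i => (eig i - lam)⁻¹) * star U := by
    apply Matrix.inv_eq_right_inv
    rw [hMeq]
    have hDD : diagonal (fun i => eig i - lam) * diagonal (fun i => (eig i - lam)⁻¹)
        = (1 : Matrix (Fin n) (Fin n) ℝ) := by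
      rw [diagonal_mul_diagonal]
      have : (fun i => (eig i - lam) * (eig i - lam)⁻¹) = fun _ => (1:ℝ) := by
        funext i; exact mul_inv_cancel₀ (hnz i)
      rw [this, diagonal_one]
    calc U * diagonal (fun i => eig i - lam) * star U
          * (U * diagonal (fun i => (eig i - lam)⁻¹) * star U)
        = U * diagonal (fun i => eig i - lam) * (star U * U)
          * (diagonal (fun i => (eig i - lam)⁻¹) * star U) := by
          simp only [Matrix.mul_assoc]
      _ = U * (diagonal (fun i => eig i - lam) * diagonal (fun i => (eig i - lam)⁻¹))
            * star U := by rw [hUU']; simp only [Matrix.mul_one, Matrix.mul_assoc]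
      _ = 1 := by rw [hDD, Matrix.mul_one, hUU]
  set w : Fin n → ℝ := star U *ᵥ z with hw
  set S : ℝ := ∑ i, (w i) ^ 2 with hSdef
  set T : ℝ := ∑ i, (eig i - lam)⁻¹ * (w i) ^ 2 with hTdef
  have hwz : w ≠ 0 := by
    intro h
    apply hz
    have : z = U *ᵥ w := by
      rw [hw, mulVec_mulVec, hUU, one_mulVec]
    rw [this, h, mulVec_zero]
  have hS : 0 < S := by
    obtain ⟨i, hi⟩ := Function.ne_iff.mp hwz
    have hi' : w i ≠ 0 := by simpa using hi
    exact Finset.sum_pos' (fun j _ => sq_nonneg _)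
      ⟨i, Finset.mem_univ i, pow_pos (abs_pos.mpr hi') 2 |>.trans_le (by rw [sq_abs])⟩
  -- min and max eigenvalues
  obtain ⟨i0, -, hi0⟩ := Finset.exists_min_image Finset.univ eig ⟨Classical.arbitrary _, Finset.mem_univ _⟩
  obtain ⟨i1, -, hi1⟩ := Finset.exists_max_image Finset.univ eig ⟨Classical.arbitrary _, Finset.mem_univ _⟩
  have hi0' : ∀ i, eig i0 ≤ eig i := fun i => hi0 i (Finset.mem_univ i)
  have hi1' : ∀ i, eig i ≤ eig i1 := fun i => hi1 i (Finset.mem_univ i)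
  have hsign : 0 < eig i0 - lam ∨ eig i1 - lam < 0 := by
    rcases hlam with h | h
    · exact Or.inl (by linarith [h i0])
    · exact Or.inr (by linarith [h i1])
  have hmM : eig i0 - lam ≤ eig i1 - lam := by linarith [hi0' i1]
  have hsign' : ∀ i, 0 < eig i - lam ∨ eig i1 - lam < 0 := by
    intro i
    rcases hsign with h | h
    · exact Or.inl (lt_of_lt_of_le h (by linarith [hi0' i]))
    · exact Or.inr h
  have hT1 : (eig i1 - lam)⁻¹ * S ≤ T := by
    rw [hSdef, Finset.mul_sum]
    apply Finset.sum_le_sum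
    intro i _
    exact mul_le_mul_of_nonneg_right
      (inv_antitone_aux (by linarith [hi1' i]) (hsign' i)) (sq_nonneg _)
  have hT0 : T ≤ (eig i0 - lam)⁻¹ * S := by
    rw [hSdef, Finset.mul_sum]
    apply Finset.sum_le_sum
    intro i _
    apply mul_le_mul_of_nonneg_right _ (sq_nonneg _)
    apply inv_antitone_aux (by linarith [hi0' i])
    rcases hsign with h | h
    · exact Or.inl h
    · exact Or.inr (by linarith [hi1' i])
  obtain ⟨hTne, hlo, hhi⟩ := div_bounds_aux hS hsign hmM hT1 hT0
  set μ : ℝ := lam + S / T with hμdef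
  have hμlo : eig i0 ≤ μ := by rw [hμdef]; linarith
  have hμhi : μ ≤ eig i1 := by rw [hμdef]; linarith
  -- construct the witness
  suffices hexist : ∃ e : Fin n → ℝ, e ≠ 0 ∧
      (∑ j, eig j * (e j) ^ 2) / (∑ j, (e j) ^ 2) = μ by
    obtain ⟨e, he0, hR⟩ := hexist
    refine ⟨U *ᵥ e, ?_, ?_⟩
    · intro h
      apply he0
      have : e = star U *ᵥ (U *ᵥ e) := by
        rw [mulVec_mulVec, hUU', one_mulVec]
      rw [this, h, mulVec_zero]
    · have hback : star U *ᵥ (U *ᵥ e) = e := by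
        rw [mulVec_mulVec, hUU', one_mulVec]
      have hAs : (U *ᵥ e) ⬝ᵥ Atil *ᵥ (U *ᵥ e) = ∑ j, eig j * (e j) ^ 2 := by
        rw [hAeq, key, hback]
      have hss : (U *ᵥ e) ⬝ᵥ (U *ᵥ e) = ∑ j, (e j) ^ 2 := by
        rw [hxx, hback]
      rw [hAs, hss, hR]
      have hLHS : z ⬝ᵥ (Atil - lam • (1 : Matrix (Fin n) (Fin n) ℝ))⁻¹ *ᵥ z = T := by
        rw [hinv, key]
      rw [hLHS, hxx z]
      have : μ - lam = S / T := by rw [hμdef]; ring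
      rw [this, inv_div]
  -- existence of e
  by_cases hc : eig i0 < μ
  · have hi01 : i0 ≠ i1 := by
      intro h
      rw [h] at hc
      linarith
    set a : ℝ := Real.sqrt (eig i1 - μ) with hadef
    set b : ℝ := Real.sqrt (μ - eig i0) with hbdef
    have ha2 : a ^ 2 = eig i1 - μ := Real.sq_sqrt (by linarith)
    have hb2 : b ^ 2 = μ - eig i0 := Real.sq_sqrt (by linarith)
    have hbpos : 0 < b := Real.sqrt_pos.mpr (by linarith)
    set e : Fin n → ℝ := fun j => if j = i0 then a else if j = i1 then b else 0
      with hedef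
    have hei0 : e i0 = a := by simp [hedef]
    have hei1 : e i1 = b := by simp [hedef, Ne.symm hi01]
    have heoff : ∀ j, j ≠ i0 → j ≠ i1 → e j = 0 := by
      intro j h0 h1
      simp [hedef, h0, h1]
    have hsum : ∀ d : Fin n → ℝ, ∑ j, d j * (e j) ^ 2 = d i0 * a ^ 2 + d i1 * b ^ 2 := by
      intro d
      rw [← Finset.sum_subset (Finset.subset_univ ({i0, i1} : Finset (Fin n)))]
      · rw [Finset.sum_pair hi01, hei0, hei1]
      · intro x _ hx
        simp only [Finset.mem_insert, Finset.mem_singleton, not_or] at hx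
        rw [heoff x hx.1 hx.2]
        ring
    refine ⟨e, ?_, ?_⟩
    · intro h
      have := congrFun h i1
      rw [hei1] at this
      simp at this
      linarith
    · have h1 : ∑ j, (e j) ^ 2 = a ^ 2 + b ^ 2 := by
        have := hsum (fun _ => 1)
        simpa using this
      rw [hsum, h1, ha2, hb2]
      have hden : eig i1 - μ + (μ - eig i0) = eig i1 - eig i0 := by ring
      rw [hden]
      have hd : eig i1 - eig i0 ≠ 0 := by
        have : eig i0 < eig i1 := by linarith
        linarith
      field_simp
      ring
  · have hμ0 : μ = eig i0 := le_antisymm (not_lt.mp hc) hμlo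
    refine ⟨fun j => if j = i0 then (1:ℝ) else 0, ?_, ?_⟩
    · intro h
      have := congrFun h i0
      simp at this
    · have hsum : ∀ d : Fin n → ℝ,
          ∑ j, d j * ((if j = i0 then (1:ℝ) else 0)) ^ 2 = d i0 := by
        intro d
        rw [Finset.sum_eq_single i0]
        · simp
        · intro j _ hj
          simp [hj]
        · intro h
          exact absurd (Finset.mem_univ i0) h
      have h1 : ∑ j, ((fun j => if j = i0 then (1:ℝ) else 0) j) ^ 2 = 1 := by
        have := hsum (fun _ => 1)
        simpa using this
      rw [hsum, h1, hμ0]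
      simp
end

section
/- If λ ∈ ℂ is an eigenvalue of the generalized eigenvalue problem 𝒯 w = λ 𝒩 w with nonzero imaginary part, then |λ − 1|² ≤ 1 − λmin(Ã); in particular non-real eigenvalues lie in the closed disk of radius √(1 − λmin(Ã)) centered at 1 (and exist only if λmin(Ã) ≤ 1). -/
open Matrix

private lemma sum2_antisymm' {n : ℕ} (f : Fin n → Fin n → ℝ) (hf : ∀ i j, f i j = - f j i) :
    ∑ i, ∑ j, f i j = 0 := by
  have h1 : ∑ i, ∑ j, f i j = ∑ j, ∑ i, f i j := Finset.sum_comm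
  have h2 : ∑ j, ∑ i, f i j = - ∑ j, ∑ i, f j i := by
    rw [← Finset.sum_neg_distrib]
    refine Finset.sum_congr rfl fun j _ => ?_
    rw [← Finset.sum_neg_distrib]
    exact Finset.sum_congr rfl fun i _ => hf i j
  linarith

private lemma quad_re' {n : ℕ} (Atil : Matrix (Fin n) (Fin n) ℝ) (x : Fin n → ℂ) :
    (star x ⬝ᵥ ((Atil.map Complex.ofReal) *ᵥ x)).re
      = (fun i => (x i).re) ⬝ᵥ (Atil *ᵥ fun i => (x i).re)
        + (fun i => (x i).im) ⬝ᵥ (Atil *ᵥ fun i => (x i).im) := by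
  simp only [dotProduct, mulVec, Pi.star_apply, RCLike.star_def, Matrix.map_apply,
    Complex.re_sum, Complex.im_sum, Complex.mul_re, Complex.mul_im, Complex.conj_re,
    Complex.conj_im, Complex.ofReal_re, Complex.ofReal_im, zero_mul, mul_zero,
    sub_zero, zero_add, add_zero, neg_mul, neg_neg]
  rw [← Finset.sum_add_distrib]
  exact Finset.sum_congr rfl fun i _ => by rw [sub_neg_eq_add]

private lemma quad_im' {n : ℕ} (Atil : Matrix (Fin n) (Fin n) ℝ) (hsym : Atil.IsHermitian)
    (x : Fin n → ℂ) :
    (star x ⬝ᵥ ((Atil.map Complex.ofReal) *ᵥ x)).im = 0 := by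
  have hS : ∀ i j : Fin n, Atil i j = Atil j i := fun i j => by
    conv_lhs => rw [← hsym]
    simp [Matrix.conjTranspose_apply]
  simp only [dotProduct, mulVec, Pi.star_apply, RCLike.star_def, Matrix.map_apply,
    Complex.re_sum, Complex.im_sum, Complex.mul_re, Complex.mul_im, Complex.conj_re,
    Complex.conj_im, Complex.ofReal_re, Complex.ofReal_im, zero_mul, mul_zero,
    sub_zero, zero_add, add_zero, neg_mul, neg_neg]
  have key := sum2_antisymm' (fun i j => (x i).re * (Atil i j * (x j).im)
      - (x i).im * (Atil i j * (x j).re))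
    (fun i j => by simp only [hS i j]; ring)
  calc ∑ i : Fin n, ((x i).re * ∑ j, Atil i j * (x j).im + -((x i).im * ∑ j, Atil i j * (x j).re))
      = ∑ i : Fin n, ∑ j, ((x i).re * (Atil i j * (x j).im) - (x i).im * (Atil i j * (x j).re)) := by
        refine Finset.sum_congr rfl fun i _ => ?_
        rw [Finset.mul_sum, Finset.mul_sum, ← sub_eq_add_neg, ← Finset.sum_sub_distrib]
    _ = 0 := key

private lemma shift_posSemidef' {n : ℕ} (Atil : Matrix (Fin n) (Fin n) ℝ)
    (hsym : Atil.IsHermitian) (lmin : ℝ) (hlb : ∀ i, lmin ≤ hsym.eigenvalues i) :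
    (Atil - lmin • 1).PosSemidef := by
  have hU : (hsym.eigenvectorUnitary : Matrix (Fin n) (Fin n) ℝ) *
      star (hsym.eigenvectorUnitary : Matrix (Fin n) (Fin n) ℝ) = 1 :=
    Matrix.mem_unitaryGroup_iff.mp (hsym.eigenvectorUnitary).2
  have key : Atil - lmin • 1 = (hsym.eigenvectorUnitary : Matrix (Fin n) (Fin n) ℝ) *
      diagonal (fun i => hsym.eigenvalues i - lmin) *
      (hsym.eigenvectorUnitary : Matrix (Fin n) (Fin n) ℝ)ᴴ := by
    conv_lhs => rw [hsym.spectral_theorem]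
    rw [← Matrix.star_eq_conjTranspose]
    have hd : diagonal (fun i => hsym.eigenvalues i - lmin)
        = diagonal (RCLike.ofReal ∘ hsym.eigenvalues) - lmin • 1 := by
      ext i j
      by_cases h : i = j <;> simp [h, Matrix.one_apply, diagonal]
    rw [hd, Matrix.mul_sub, Matrix.sub_mul, Matrix.mul_smul, Matrix.smul_mul, mul_one, hU, Unitary.conjStarAlgAut_apply]
  rw [key]
  exact (Matrix.posSemidef_diagonal_iff.mpr
    (fun i => sub_nonneg.mpr (hlb i))).mul_mul_conjTranspose_same _

private lemma dot_transpose' {n m : ℕ} (R : Matrix (Fin m) (Fin n) ℝ) (x : Fin n → ℂ)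
    (y : Fin m → ℂ) :
    star x ⬝ᵥ ((Rᵀ.map Complex.ofReal) *ᵥ y) = star ((R.map Complex.ofReal) *ᵥ x) ⬝ᵥ y := by
  have hconj : (R.map Complex.ofReal)ᴴ = Rᵀ.map Complex.ofReal := by
    ext i j
    simp [Matrix.conjTranspose_apply, Complex.conj_ofReal]
  rw [star_mulVec, Matrix.dotProduct_mulVec, hconj]

private lemma star_dot_self' {k : ℕ} (v : Fin k → ℂ) :
    star v ⬝ᵥ v = ((∑ i, Complex.normSq (v i) : ℝ) : ℂ) := by
  push_cast
  simp [dotProduct, Complex.normSq_eq_conj_mul_self]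

/-- If λ ∈ ℂ is an eigenvalue of the generalized eigenvalue problem 𝒯w = λ𝒩w
with nonzero imaginary part, then |λ − 1|² ≤ 1 − λmin(Ã). -/
theorem stmt_13
    (n m l : ℕ) (hn : 0 < n) (hm : 0 < m) (hl : 0 < l)
    (Atil : Matrix (Fin n) (Fin n) ℝ) (hA : Atil.PosDef)
    (R : Matrix (Fin m) (Fin n) ℝ) (K : Matrix (Fin l) (Fin n) ℝ)
    (lmin : ℝ) (hlmin : IsLeast (Set.range hA.1.eigenvalues) lmin)
    (lam : ℂ) (hlam : lam.im ≠ 0)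
    (x : Fin n → ℂ) (y : Fin m → ℂ) (z : Fin l → ℂ)
    (hw : ¬(x = 0 ∧ y = 0 ∧ z = 0))
    (h1 : (Atil.map Complex.ofReal) *ᵥ x + (Rᵀ.map Complex.ofReal) *ᵥ y
            + (Kᵀ.map Complex.ofReal) *ᵥ z
        = lam • (x + (Rᵀ.map Complex.ofReal) *ᵥ y + (Kᵀ.map Complex.ofReal) *ᵥ z))
    (h2 : (R.map Complex.ofReal) *ᵥ x = -(lam • y))
    (h3 : (K.map Complex.ofReal) *ᵥ x = -(lam • z)) :
    ‖lam - 1‖ ^ 2 ≤ 1 - lmin := by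
  have hlam0 : lam ≠ 0 := fun h => hlam (by simp [h])
  -- x ≠ 0
  have hx : x ≠ 0 := by
    intro hx0
    apply hw
    refine ⟨hx0, ?_, ?_⟩
    · have : (0 : Fin m → ℂ) = -(lam • y) := by simpa [hx0] using h2
      funext i
      have h5 := congrFun this i
      simp only [Pi.zero_apply, Pi.neg_apply, Pi.smul_apply, smul_eq_mul] at h5
      rcases mul_eq_zero.mp (neg_eq_zero.mp h5.symm) with h | h
      · exact absurd h hlam0
      · simpa using h
    · have : (0 : Fin l → ℂ) = -(lam • z) := by simpa [hx0] using h3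
      funext i
      have h5 := congrFun this i
      simp only [Pi.zero_apply, Pi.neg_apply, Pi.smul_apply, smul_eq_mul] at h5
      rcases mul_eq_zero.mp (neg_eq_zero.mp h5.symm) with h | h
      · exact absurd h hlam0
      · simpa using h
  -- notation
  set Ac := Atil.map Complex.ofReal with hAc
  set p := (R.map Complex.ofReal) *ᵥ x with hp
  set q := (K.map Complex.ofReal) *ᵥ x with hq
  set a : ℂ := star x ⬝ᵥ (Ac *ᵥ x) with ha
  set s : ℝ := ∑ i, Complex.normSq (x i) with hs
  set b : ℝ := (∑ i, Complex.normSq (p i)) + ∑ i, Complex.normSq (q i) with hb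
  have hs_pos : 0 < s := by
    have hne : ∃ i, x i ≠ 0 := by
      by_contra hc
      push_neg at hc
      exact hx (funext fun i => hc i)
    obtain ⟨i, hi⟩ := hne
    refine Finset.sum_pos' (fun j _ => Complex.normSq_nonneg _) ⟨i, Finset.mem_univ i, ?_⟩
    exact Complex.normSq_pos.mpr hi
  -- dot h1 with star x
  have t_def : star x ⬝ᵥ ((Rᵀ.map Complex.ofReal) *ᵥ y) + star x ⬝ᵥ ((Kᵀ.map Complex.ofReal) *ᵥ z)
      = star p ⬝ᵥ y + star q ⬝ᵥ z := by
    rw [dot_transpose', dot_transpose']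
  have Hdot : a + (star p ⬝ᵥ y + star q ⬝ᵥ z)
      = lam * ((s : ℂ) + (star p ⬝ᵥ y + star q ⬝ᵥ z)) := by
    have H := congrArg (fun v => star x ⬝ᵥ v) h1
    simp only [dotProduct_add, dotProduct_smul, smul_eq_mul] at H
    rw [dot_transpose', dot_transpose', star_dot_self'] at H
    rw [ha]
    linear_combination H
  have Ht : lam * (star p ⬝ᵥ y + star q ⬝ᵥ z) = -(b : ℂ) := by
    have e2 : star p ⬝ᵥ p = -(lam * (star p ⬝ᵥ y)) := by
      have := congrArg (fun v => star p ⬝ᵥ v) h2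
      simpa [dotProduct_neg, dotProduct_smul] using this
    have e3 : star q ⬝ᵥ q = -(lam * (star q ⬝ᵥ z)) := by
      have := congrArg (fun v => star q ⬝ᵥ v) h3
      simpa [dotProduct_neg, dotProduct_smul] using this
    have hbb : star p ⬝ᵥ p + star q ⬝ᵥ q = (b : ℂ) := by
      rw [star_dot_self', star_dot_self', hb]
      push_cast
      ring
    rw [← hbb, e2, e3]
    ring
  -- master polynomial identity
  have E : lam * lam * (s : ℂ) - lam * (a + (b : ℂ)) + (b : ℂ) = 0 := by
    have := congrArg (fun w => lam * w) Hdot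
    linear_combination (1 - lam) * Ht - this
  -- real facts about a
  have haim : a.im = 0 := quad_im' Atil hA.1 x
  have hare : lmin * s ≤ a.re := by
    have hPS := shift_posSemidef' Atil hA.1 lmin
      (fun i => hlmin.2 (Set.mem_range_self i))
    have hRay : ∀ u : Fin n → ℝ, lmin * (u ⬝ᵥ u) ≤ u ⬝ᵥ (Atil *ᵥ u) := by
      intro u
      have := hPS.dotProduct_mulVec_nonneg u
      simp only [star_trivial, Matrix.sub_mulVec, dotProduct_sub, Matrix.smul_mulVec,
        Matrix.one_mulVec, dotProduct_smul, smul_eq_mul] at this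
      linarith
    have hu := hRay (fun i => (x i).re)
    have hv := hRay (fun i => (x i).im)
    have hre := quad_re' Atil x
    have hsum : ((fun i => (x i).re) ⬝ᵥ fun i => (x i).re)
        + ((fun i => (x i).im) ⬝ᵥ fun i => (x i).im) = s := by
      rw [hs, dotProduct, dotProduct, ← Finset.sum_add_distrib]
      exact Finset.sum_congr rfl fun i _ => (Complex.normSq_apply _).symm
    have hls : lmin * (((fun i => (x i).re) ⬝ᵥ fun i => (x i).re)
        + ((fun i => (x i).im) ⬝ᵥ fun i => (x i).im)) = lmin * s := by rw [hsum]
    rw [ha, hre]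
    nlinarith [hu, hv, hls]
  -- extract re and im parts
  have Eim := congrArg Complex.im E
  have Ere := congrArg Complex.re E
  simp only [Complex.add_im, Complex.sub_im, Complex.mul_im, Complex.mul_re,
    Complex.add_re, Complex.sub_re, Complex.ofReal_re, Complex.ofReal_im,
    Complex.zero_im, Complex.zero_re, haim, mul_zero, zero_mul, add_zero, sub_zero] at Eim Ere
  have h2ps : 2 * lam.re * s = a.re + b := by
    have hfac : lam.im * (2 * lam.re * s - (a.re + b)) = 0 := by linarith [Eim]
    rcases mul_eq_zero.mp hfac with h | h
    · exact absurd h hlam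
    · linarith
  have h4 : 2 * lam.re * s * lam.re = (a.re + b) * lam.re := by rw [h2ps]
  -- conclude
  rw [Complex.sq_norm, Complex.normSq_apply, Complex.sub_re, Complex.sub_im,
    Complex.one_re, Complex.one_im, sub_zero]
  have key : ((lam.re - 1) * (lam.re - 1) + lam.im * lam.im) * s ≤ (1 - lmin) * s := by
    nlinarith [Ere, h2ps, h4, hare]
  exact le_of_mul_le_mul_right (by linarith [key]) hs_pos
end

section
/- Let λ ∈ ℝ, λ ≠ 0, be an eigenvalue of the generalized eigenvalue problem 𝒯 w = λ 𝒩 w with real eigenvector w = (x; y; z) ≠ 0. Then x ≠ 0, and λ satisfies the quadratic equation λ² − λ·(r_A + r_R + r_K) + (r_R + r_K) = 0, where r_A := xᵀÃx/xᵀx, r_R := ‖Rx‖²/xᵀx, and r_K := ‖Kx‖²/xᵀx. -/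
open Matrix

/-- Let λ ∈ ℝ, λ ≠ 0, be an eigenvalue of the generalized eigenvalue problem
𝒯w = λ𝒩w with real eigenvector w = (x; y; z) ≠ 0. Then x ≠ 0, and λ satisfies
λ² − λ·(r_A + r_R + r_K) + (r_R + r_K) = 0, where r_A := xᵀÃx/xᵀx,
r_R := ‖Rx‖²/xᵀx, and r_K := ‖Kx‖²/xᵀx. -/
theorem stmt_14
    (n m l : ℕ) (hn : 0 < n) (hm : 0 < m) (hl : 0 < l)
    (Atil : Matrix (Fin n) (Fin n) ℝ) (hA : Atil.PosDef)
    (R : Matrix (Fin m) (Fin n) ℝ) (K : Matrix (Fin l) (Fin n) ℝ)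
    (lam : ℝ) (hlam : lam ≠ 0)
    (x : Fin n → ℝ) (y : Fin m → ℝ) (z : Fin l → ℝ)
    (hw : ¬(x = 0 ∧ y = 0 ∧ z = 0))
    (h1 : Atil *ᵥ x + Rᵀ *ᵥ y + Kᵀ *ᵥ z = lam • (x + Rᵀ *ᵥ y + Kᵀ *ᵥ z))
    (h2 : R *ᵥ x = -(lam • y))
    (h3 : K *ᵥ x = -(lam • z)) :
    x ≠ 0 ∧
    lam ^ 2
      - lam * ((x ⬝ᵥ Atil *ᵥ x) / (x ⬝ᵥ x)
          + ((R *ᵥ x) ⬝ᵥ (R *ᵥ x)) / (x ⬝ᵥ x)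
          + ((K *ᵥ x) ⬝ᵥ (K *ᵥ x)) / (x ⬝ᵥ x))
      + (((R *ᵥ x) ⬝ᵥ (R *ᵥ x)) / (x ⬝ᵥ x)
          + ((K *ᵥ x) ⬝ᵥ (K *ᵥ x)) / (x ⬝ᵥ x)) = 0 := by
  have hx : x ≠ 0 := by
    intro hx0
    apply hw
    refine ⟨hx0, ?_, ?_⟩
    · have := h2
      rw [hx0, mulVec_zero] at this
      have hy : lam • y = 0 := by simpa [neg_eq_zero] using this.symm
      exact (smul_eq_zero.mp hy).resolve_left hlam
    · have := h3
      rw [hx0, mulVec_zero] at this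
      have hz : lam • z = 0 := by simpa [neg_eq_zero] using this.symm
      exact (smul_eq_zero.mp hz).resolve_left hlam
  have hy2 : (R *ᵥ x) ⬝ᵥ (R *ᵥ x) = lam ^ 2 * (y ⬝ᵥ y) := by
    rw [h2]; simp [smul_dotProduct, dotProduct_smul]; ring
  have hz2 : (K *ᵥ x) ⬝ᵥ (K *ᵥ x) = lam ^ 2 * (z ⬝ᵥ z) := by
    rw [h3]; simp [smul_dotProduct, dotProduct_smul]; ring
  have hxy : x ⬝ᵥ (Rᵀ *ᵥ y) = -(lam * (y ⬝ᵥ y)) := by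
    rw [dotProduct_mulVec, vecMul_transpose, h2]
    simp [smul_dotProduct]
  have hxz : x ⬝ᵥ (Kᵀ *ᵥ z) = -(lam * (z ⬝ᵥ z)) := by
    rw [dotProduct_mulVec, vecMul_transpose, h3]
    simp [smul_dotProduct]
  have main := congrArg (fun v => x ⬝ᵥ v) h1
  simp only [dotProduct_add, dotProduct_smul, smul_eq_mul, hxy, hxz] at main
  refine ⟨hx, ?_⟩
  have hp' : x ⬝ᵥ x ≠ 0 := fun h => hx (dotProduct_self_eq_zero.mp h)
  field_simp [hy2, hz2]
  linear_combination (-lam) * main + (1 - lam) * hy2 + (1 - lam) * hz2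
end

section
/- Let λ ∈ ℝ, λ ≠ 0, be an eigenvalue of the generalized eigenvalue problem 𝒯 w = λ 𝒩 w with real eigenvector w = (x; y; z) ≠ 0 such that x ∈ ker R ∩ ker K. Then y = 0, z = 0, x ≠ 0, and Ãx = λx; consequently λmin(Ã) ≤ λ ≤ λmax(Ã). -/
open Matrix

/-- Let λ ∈ ℝ, λ ≠ 0, be an eigenvalue of the generalized eigenvalue problem
𝒯w = λ𝒩w with real eigenvector w = (x; y; z) ≠ 0 such that x ∈ ker R ∩ ker K.
Then y = 0, z = 0, x ≠ 0, and Ãx = λx; consequently λmin(Ã) ≤ λ ≤ λmax(Ã). -/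
theorem stmt_16
    (n m l : ℕ) (hn : 0 < n) (hm : 0 < m) (hl : 0 < l)
    (Atil : Matrix (Fin n) (Fin n) ℝ) (hA : Atil.PosDef)
    (R : Matrix (Fin m) (Fin n) ℝ) (K : Matrix (Fin l) (Fin n) ℝ)
    (lmin lmax : ℝ)
    (hlmin : IsLeast (Set.range hA.1.eigenvalues) lmin)
    (hlmax : IsGreatest (Set.range hA.1.eigenvalues) lmax)
    (lam : ℝ) (hlam : lam ≠ 0)
    (x : Fin n → ℝ) (y : Fin m → ℝ) (z : Fin l → ℝ)
    (hw : ¬(x = 0 ∧ y = 0 ∧ z = 0))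
    (h1 : Atil *ᵥ x + Rᵀ *ᵥ y + Kᵀ *ᵥ z = lam • (x + Rᵀ *ᵥ y + Kᵀ *ᵥ z))
    (h2 : R *ᵥ x = -(lam • y))
    (h3 : K *ᵥ x = -(lam • z))
    (hxR : R *ᵥ x = 0) (hxK : K *ᵥ x = 0) :
    y = 0 ∧ z = 0 ∧ x ≠ 0 ∧ Atil *ᵥ x = lam • x ∧ lmin ≤ lam ∧ lam ≤ lmax := by
  have hy : y = 0 := by
    have : lam • y = 0 := by rw [← neg_eq_zero, ← h2, hxR]
    rcases smul_eq_zero.mp this with h | h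
    · exact absurd h hlam
    · exact h
  have hz : z = 0 := by
    have : lam • z = 0 := by rw [← neg_eq_zero, ← h3, hxK]
    rcases smul_eq_zero.mp this with h | h
    · exact absurd h hlam
    · exact h
  subst hy hz
  simp only [mulVec_zero, add_zero] at h1
  have hx : x ≠ 0 := by
    intro hx0
    exact hw ⟨hx0, rfl, rfl⟩
  have heig : Module.End.HasEigenvalue (Matrix.toLin' Atil) lam :=
    Module.End.hasEigenvalue_of_hasEigenvector
      ⟨Module.End.mem_eigenspace_iff.mpr (by rw [Matrix.toLin'_apply, h1]), hx⟩
  have hspec : lam ∈ spectrum ℝ Atil := by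
    rw [← AlgEquiv.spectrum_eq (Matrix.toLinAlgEquiv (Pi.basisFun ℝ (Fin n))) Atil]
    exact heig.mem_spectrum
  have hmem : lam ∈ Set.range hA.1.eigenvalues := by
    rwa [← Matrix.IsHermitian.spectrum_real_eq_range_eigenvalues hA.1]
  exact ⟨rfl, rfl, hx, h1, hlmin.2 hmem, hlmax.2 hmem⟩
end

section
/- Let λ ∈ ℝ be an eigenvalue of the generalized eigenvalue problem 𝒯 w = λ 𝒩 w with λ ∉ {0, 1} and λ ∉ [λmin(Ã), λmax(Ã)], admitting a real eigenvector w = (x; y; z) ≠ 0 with x ∈ ker K and x ∉ ker R. Let σ⁺ denote the smallest positive eigenvalue of RRᵀ and σmax := λmax(RRᵀ) its largest eigenvalue (R ≠ 0 since x ∉ ker R). Then σ⁺/(λmax(Ã) + σmax) ≤ λ ≤ λmax(Ã) + σmax. -/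
open Matrix

lemma dot_eq_inner' {k : ℕ} (u v : Fin k → ℝ) :
    u ⬝ᵥ v = @inner ℝ (EuclideanSpace ℝ (Fin k)) _ (WithLp.toLp 2 u) (WithLp.toLp 2 v) := by
  simp [dotProduct, PiLp.inner_apply, RCLike.inner_apply, conj_trivial, mul_comm]

lemma herm_expand {k : ℕ} (M : Matrix (Fin k) (Fin k) ℝ) (hM : M.IsHermitian)
    (u : Fin k → ℝ) :
    ∃ (c : Fin k → ℝ) (b : Fin k → Fin k → ℝ),
      (∀ i, M *ᵥ b i = hM.eigenvalues i • b i) ∧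
      (∀ i, c i = b i ⬝ᵥ u) ∧
      u ⬝ᵥ u = ∑ i, c i ^ 2 ∧
      u ⬝ᵥ (M *ᵥ u) = ∑ i, hM.eigenvalues i * c i ^ 2 ∧
      (M *ᵥ u) ⬝ᵥ (M *ᵥ u) = ∑ i, hM.eigenvalues i ^ 2 * c i ^ 2 := by
  set b : Fin k → Fin k → ℝ := fun i => ⇑(hM.eigenvectorBasis i) with hb
  have heig : ∀ i, M *ᵥ b i = hM.eigenvalues i • b i := fun i => hM.mulVec_eigenvectorBasis i
  have par : ∀ v w : Fin k → ℝ, v ⬝ᵥ w = ∑ i, (b i ⬝ᵥ v) * (b i ⬝ᵥ w) := by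
    intro v w
    have h2 : ∀ i, (b i ⬝ᵥ v) = @inner ℝ (EuclideanSpace ℝ (Fin k)) _ (WithLp.toLp 2 v) (hM.eigenvectorBasis i) :=
      fun i => (dot_eq_inner' (b i) v).trans (real_inner_comm _ _)
    have h3 : ∀ i, (b i ⬝ᵥ w) = @inner ℝ (EuclideanSpace ℝ (Fin k)) _ (hM.eigenvectorBasis i) (WithLp.toLp 2 w) :=
      fun i => dot_eq_inner' (b i) w
    rw [dot_eq_inner' v w, ← (hM.eigenvectorBasis).sum_inner_mul_inner (WithLp.toLp 2 v) (WithLp.toLp 2 w)]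
    exact Finset.sum_congr rfl fun i _ => by rw [h2 i, h3 i]
  have hdotM : ∀ v : Fin k → ℝ, ∀ i, b i ⬝ᵥ (M *ᵥ v) = hM.eigenvalues i * (b i ⬝ᵥ v) := by
    intro v i
    rw [dotProduct_mulVec, ← mulVec_transpose]
    rw [show Mᵀ = M from (conjTranspose_eq_transpose_of_trivial M) ▸ hM.eq]
    rw [heig i, smul_dotProduct, smul_eq_mul]
  refine ⟨fun i => b i ⬝ᵥ u, b, heig, fun i => rfl, ?_, ?_, ?_⟩
  · rw [par u u]; exact Finset.sum_congr rfl fun i _ => (sq _).symm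
  · rw [par u (M *ᵥ u)]
    exact Finset.sum_congr rfl fun i _ => by rw [hdotM u i]; ring
  · rw [par (M *ᵥ u) (M *ᵥ u)]
    exact Finset.sum_congr rfl fun i _ => by rw [hdotM u i]; ring

lemma dot_RRt {m n : ℕ} (R : Matrix (Fin m) (Fin n) ℝ) (w : Fin m → ℝ) :
    w ⬝ᵥ ((R * Rᵀ) *ᵥ w) = (Rᵀ *ᵥ w) ⬝ᵥ (Rᵀ *ᵥ w) := by
  rw [← mulVec_mulVec, dotProduct_mulVec, ← mulVec_transpose]

lemma dot_self_pos {k : ℕ} {v : Fin k → ℝ} (h : v ≠ 0) : 0 < v ⬝ᵥ v := by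
  have h1 : 0 ≤ v ⬝ᵥ v := Finset.sum_nonneg fun i _ => mul_self_nonneg _
  rcases h1.lt_or_eq with h2 | h2
  · exact h2
  · exact absurd (dotProduct_self_eq_zero.mp h2.symm) h



open Matrix

set_option maxHeartbeats 1000000 in
/-- Real eigenvalues λ ∉ {0,1}, λ ∉ [λmin(Ã), λmax(Ã)], with real eigenvector
(x; y; z) ≠ 0 such that x ∈ ker K and x ∉ ker R, satisfy
σ⁺/(λmax(Ã) + σmax) ≤ λ ≤ λmax(Ã) + σmax, where σ⁺ and σmax are the smallest
positive and the largest eigenvalue of RRᵀ. -/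
theorem stmt_17
    (n m l : ℕ) (hn : 0 < n) (hm : 0 < m) (hl : 0 < l)
    (Atil : Matrix (Fin n) (Fin n) ℝ) (hA : Atil.PosDef)
    (R : Matrix (Fin m) (Fin n) ℝ) (K : Matrix (Fin l) (Fin n) ℝ)
    (lminA lmaxA : ℝ)
    (hlmin : IsLeast (Set.range hA.1.eigenvalues) lminA)
    (hlmax : IsGreatest (Set.range hA.1.eigenvalues) lmaxA)
    (hRR : (R * Rᵀ).IsHermitian)
    (σplus σmax : ℝ)
    (hσplus : IsLeast {σ : ℝ | σ ∈ Set.range hRR.eigenvalues ∧ 0 < σ} σplus)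
    (hσmax : IsGreatest (Set.range hRR.eigenvalues) σmax)
    (lam : ℝ) (hlam0 : lam ≠ 0) (hlam1 : lam ≠ 1)
    (hlamI : lam ∉ Set.Icc lminA lmaxA)
    (x : Fin n → ℝ) (y : Fin m → ℝ) (z : Fin l → ℝ)
    (hw : ¬(x = 0 ∧ y = 0 ∧ z = 0))
    (h1 : Atil *ᵥ x + Rᵀ *ᵥ y + Kᵀ *ᵥ z = lam • (x + Rᵀ *ᵥ y + Kᵀ *ᵥ z))
    (h2 : R *ᵥ x = -(lam • y))
    (h3 : K *ᵥ x = -(lam • z))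
    (hxK : K *ᵥ x = 0) (hxR : R *ᵥ x ≠ 0) :
    σplus / (lmaxA + σmax) ≤ lam ∧ lam ≤ lmaxA + σmax := by
  have hx0 : x ≠ 0 := by
    rintro rfl
    exact hxR (mulVec_zero R)
  -- z = 0
  have hz : z = 0 := by
    have hz1 : lam • z = 0 := by
      have := hxK.symm.trans h3
      rwa [eq_comm, neg_eq_zero] at this
    rcases smul_eq_zero.mp hz1 with h | h
    · exact absurd h hlam0
    · exact h
  -- lam • (Rᵀ *ᵥ y) = - (Rᵀ *ᵥ (R *ᵥ x))
  have hyu : lam • y = -(R *ᵥ x) := by rw [h2, neg_neg]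
  have hRy : lam • (Rᵀ *ᵥ y) = -(Rᵀ *ᵥ (R *ᵥ x)) := by
    rw [← mulVec_smul, hyu, mulVec_neg]
  -- key vector identity
  have key : (lam - 1) • (Rᵀ *ᵥ (R *ᵥ x)) = (lam * lam) • x - lam • (Atil *ᵥ x) := by
    funext i
    have e := congrFun h1 i
    have ey := congrFun hRy i
    simp only [hz, mulVec_zero, add_zero, Pi.add_apply, Pi.smul_apply, Pi.sub_apply,
      Pi.neg_apply, Pi.zero_apply, smul_eq_mul] at e ey ⊢
    linear_combination lam * e + (lam - 1) * ey
  -- scalar identities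
  have e1 : (lam - 1) * ((R *ᵥ x) ⬝ᵥ (R *ᵥ x)) =
      (lam * lam) * (x ⬝ᵥ x) - lam * (x ⬝ᵥ (Atil *ᵥ x)) := by
    have h := congrArg (fun w => x ⬝ᵥ w) key
    simp only [dotProduct_smul, dotProduct_sub, smul_eq_mul] at h
    have hxg : x ⬝ᵥ (Rᵀ *ᵥ (R *ᵥ x)) = (R *ᵥ x) ⬝ᵥ (R *ᵥ x) := by
      rw [dotProduct_mulVec, vecMul_transpose]
    rw [hxg] at h
    linear_combination h
  have e2 : (lam - 1) ^ 2 * ((Rᵀ *ᵥ (R *ᵥ x)) ⬝ᵥ (Rᵀ *ᵥ (R *ᵥ x))) =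
      lam ^ 4 * (x ⬝ᵥ x) - 2 * lam ^ 3 * (x ⬝ᵥ (Atil *ᵥ x))
        + lam ^ 2 * ((Atil *ᵥ x) ⬝ᵥ (Atil *ᵥ x)) := by
    have h := congrArg (fun w => w ⬝ᵥ w) key
    simp only [smul_dotProduct, dotProduct_smul, sub_dotProduct, dotProduct_sub,
      smul_eq_mul] at h
    rw [dotProduct_comm (Atil *ᵥ x) x] at h
    linear_combination h
  -- expansions
  obtain ⟨cA, bA, hbAeig, hcA, eXA, ePA, evvA⟩ := herm_expand Atil hA.1 x
  obtain ⟨cR, bR, hbReig, hcR, eUR, eQR, _⟩ := herm_expand (R * Rᵀ) hRR (R *ᵥ x)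
  have eQR' : (Rᵀ *ᵥ (R *ᵥ x)) ⬝ᵥ (Rᵀ *ᵥ (R *ᵥ x)) = ∑ i, hRR.eigenvalues i * cR i ^ 2 := by
    rw [← dot_RRt, eQR]
  -- positivity
  have hX : 0 < x ⬝ᵥ x := dot_self_pos hx0
  have hU : 0 < (R *ᵥ x) ⬝ᵥ (R *ᵥ x) := dot_self_pos hxR
  have hlminpos : 0 < lminA := by
    obtain ⟨i, hi⟩ := hlmin.1
    exact hi ▸ hA.eigenvalues_pos i
  have hlmaxpos : 0 < lmaxA := lt_of_lt_of_le hlminpos (hlmax.2 hlmin.1)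
  have hσpluspos : 0 < σplus := hσplus.1.2
  have hσle : σplus ≤ σmax := hσmax.2 hσplus.1.1
  have hσmaxpos : 0 < σmax := lt_of_lt_of_le hσpluspos hσle
  have hL : 0 < lmaxA + σmax := by linarith
  -- Rayleigh bounds for Atil
  have hP_ub : x ⬝ᵥ (Atil *ᵥ x) ≤ lmaxA * (x ⬝ᵥ x) := by
    rw [ePA, eXA, Finset.mul_sum]
    exact Finset.sum_le_sum fun i _ =>
      mul_le_mul_of_nonneg_right (hlmax.2 ⟨i, rfl⟩) (sq_nonneg _)
  have hP_lb : lminA * (x ⬝ᵥ x) ≤ x ⬝ᵥ (Atil *ᵥ x) := by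
    rw [ePA, eXA, Finset.mul_sum]
    exact Finset.sum_le_sum fun i _ =>
      mul_le_mul_of_nonneg_right (hlmin.2 ⟨i, rfl⟩) (sq_nonneg _)
  have hP_pos : 0 < x ⬝ᵥ (Atil *ᵥ x) := lt_of_lt_of_le (mul_pos hlminpos hX) hP_lb
  -- Rayleigh bounds for R Rᵀ
  have hPSD : (R * Rᵀ).PosSemidef := by
    have := posSemidef_self_mul_conjTranspose R
    rwa [conjTranspose_eq_transpose_of_trivial] at this
  have hQ_ub : (Rᵀ *ᵥ (R *ᵥ x)) ⬝ᵥ (Rᵀ *ᵥ (R *ᵥ x)) ≤ σmax * ((R *ᵥ x) ⬝ᵥ (R *ᵥ x)) := by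
    rw [eQR', eUR, Finset.mul_sum]
    exact Finset.sum_le_sum fun i _ =>
      mul_le_mul_of_nonneg_right (hσmax.2 ⟨i, rfl⟩) (sq_nonneg _)
  have hker : ∀ i, hRR.eigenvalues i = 0 → cR i = 0 := by
    intro i h0
    have hb := hbReig i
    rw [h0, zero_smul] at hb
    have h4 : (Rᵀ *ᵥ bR i) ⬝ᵥ (Rᵀ *ᵥ bR i) = 0 := by
      rw [← dot_RRt, hb, dotProduct_zero]
    have h5 : Rᵀ *ᵥ bR i = 0 := dotProduct_self_eq_zero.mp h4
    rw [hcR i, dotProduct_mulVec, ← mulVec_transpose, h5, zero_dotProduct]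
  have hQ_lb : σplus * ((R *ᵥ x) ⬝ᵥ (R *ᵥ x)) ≤ (Rᵀ *ᵥ (R *ᵥ x)) ⬝ᵥ (Rᵀ *ᵥ (R *ᵥ x)) := by
    rw [eQR', eUR, Finset.mul_sum]
    refine Finset.sum_le_sum fun i _ => ?_
    by_cases h0 : hRR.eigenvalues i = 0
    · rw [h0, hker i h0]; simp
    · have hpos : 0 < hRR.eigenvalues i :=
        lt_of_le_of_ne (hPSD.eigenvalues_nonneg i) (Ne.symm h0)
      exact mul_le_mul_of_nonneg_right (hσplus.2 ⟨⟨i, rfl⟩, hpos⟩) (sq_nonneg _)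
  -- Cauchy-Schwarz : U^2 ≤ X * Q
  have hCS : ((R *ᵥ x) ⬝ᵥ (R *ᵥ x)) ^ 2 ≤
      (x ⬝ᵥ x) * ((Rᵀ *ᵥ (R *ᵥ x)) ⬝ᵥ (Rᵀ *ᵥ (R *ᵥ x))) := by
    have hxg : x ⬝ᵥ (Rᵀ *ᵥ (R *ᵥ x)) = (R *ᵥ x) ⬝ᵥ (R *ᵥ x) := by
      rw [dotProduct_mulVec, vecMul_transpose]
    rw [← hxg, dot_eq_inner' x (Rᵀ *ᵥ (R *ᵥ x)), dot_eq_inner' x x,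
      dot_eq_inner' (Rᵀ *ᵥ (R *ᵥ x)) (Rᵀ *ᵥ (R *ᵥ x)), sq]
    exact real_inner_mul_inner_self_le _ _
  have hU_ub : (R *ᵥ x) ⬝ᵥ (R *ᵥ x) ≤ σmax * (x ⬝ᵥ x) := by
    nlinarith [hCS, hQ_ub, hU, hX]
  -- abstract the scalar quantities
  set X := x ⬝ᵥ x with hXdef
  set P := x ⬝ᵥ (Atil *ᵥ x) with hPdef
  set U := (R *ᵥ x) ⬝ᵥ (R *ᵥ x) with hUdef
  set Q := (Rᵀ *ᵥ (R *ᵥ x)) ⬝ᵥ (Rᵀ *ᵥ (R *ᵥ x)) with hQdef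
  set vv := (Atil *ᵥ x) ⬝ᵥ (Atil *ᵥ x) with hvvdef
  clear_value X P U Q vv
  clear hXdef hPdef hUdef hQdef hvvdef hCS h1 h2 h3 hxK hxR hx0 hz hyu hRy key
  -- lam > 0
  have hlampos : 0 < lam := by
    rcases lt_trichotomy lam 0 with h | h | h
    · exfalso
      nlinarith [e1, hU, hX, hP_pos]
    · exact absurd h hlam0
    · exact h
  -- upper bound
  have hub : lam ≤ lmaxA + σmax := by
    nlinarith [e1, hU, hU_ub, hP_ub, mul_pos hlampos hX, hX]
  refine ⟨?_, hub⟩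
  -- lower bound
  -- lower bound
  by_cases hc : 1 ≤ lam
  · have h5 : σplus / (lmaxA + σmax) ≤ 1 := by
      rw [div_le_one hL]; linarith
    exact le_trans h5 hc
  push_neg at hc
  have hlt : lam < lminA := by
    rw [Set.mem_Icc, not_and_or, not_le, not_le] at hlamI
    rcases hlamI with h | h
    · exact h
    · exfalso
      nlinarith [e1, hU, hP_ub, hX, mul_pos hlampos hX]
  -- key spectral inequality for the shifted matrix
  have hWle : vv - 2 * lam * P + lam ^ 2 * X ≤ (lmaxA - lam) * (P - lam * X) := by
    have hid : (lmaxA - lam) * (P - lam * X) - (vv - 2 * lam * P + lam ^ 2 * X)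
        = ∑ i, ((hA.1.eigenvalues i - lam) * (lmaxA - hA.1.eigenvalues i)) * cA i ^ 2 := by
      rw [eXA, ePA, evvA]
      simp only [Finset.mul_sum, ← Finset.sum_sub_distrib, ← Finset.sum_add_distrib]
      exact Finset.sum_congr rfl fun i _ => by ring
    have hnn : 0 ≤ ∑ i, ((hA.1.eigenvalues i - lam) * (lmaxA - hA.1.eigenvalues i)) * cA i ^ 2 := by
      refine Finset.sum_nonneg fun i _ => ?_
      have h1i : lam ≤ hA.1.eigenvalues i := le_trans hlt.le (hlmin.2 ⟨i, rfl⟩)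
      have h2i : hA.1.eigenvalues i ≤ lmaxA := hlmax.2 ⟨i, rfl⟩
      exact mul_nonneg (mul_nonneg (by linarith) (by linarith)) (sq_nonneg _)
    linarith
  -- combine
  have step1 : σplus * U * (lam - 1) ^ 2 ≤ lam ^ 2 * (vv - 2 * lam * P + lam ^ 2 * X) := by
    nlinarith [mul_le_mul_of_nonneg_right hQ_lb (sq_nonneg (lam - 1)), e2]
  have step2 : lam ^ 2 * (vv - 2 * lam * P + lam ^ 2 * X)
      ≤ lam ^ 2 * ((lmaxA - lam) * (P - lam * X)) :=
    mul_le_mul_of_nonneg_left hWle (sq_nonneg lam)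
  have step3 : lam * (P - lam * X) = (1 - lam) * U := by
    linear_combination e1
  have step4 : lam ^ 2 * ((lmaxA - lam) * (P - lam * X))
      = lam * (lmaxA - lam) * ((1 - lam) * U) := by
    rw [show (lam:ℝ)^2 * ((lmaxA - lam) * (P - lam * X)) = lam * (lmaxA-lam) * (lam * (P - lam*X)) from by ring, step3]
  have combined : σplus * U * (lam - 1) ^ 2 ≤ lam * (lmaxA - lam) * ((1 - lam) * U) := by
    calc σplus * U * (lam - 1) ^ 2 ≤ _ := step1
    _ ≤ _ := step2
    _ = _ := step4
  have hcancel : σplus * (1 - lam) ≤ lam * (lmaxA - lam) := by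
    have hpos : 0 < U * (1 - lam) := mul_pos hU (by linarith)
    by_contra hcon
    push_neg at hcon
    nlinarith [mul_lt_mul_of_pos_right hcon hpos, combined]
  rw [div_le_iff₀ hL]
  nlinarith [hcancel, mul_le_mul_of_nonneg_right hσle hlampos.le, sq_nonneg lam]
end

section
/- Let λ ∈ ℝ be an eigenvalue of the generalized eigenvalue problem 𝒯 w = λ 𝒩 w with λ ∉ {0, 1} and λ ∉ [λmin(Ã), λmax(Ã)], admitting a real eigenvector w = (x; y; z) ≠ 0 with x ∈ ker R and x ∉ ker K. Let τ⁺ denote the smallest positive eigenvalue of KKᵀ and τmax := λmax(KKᵀ) its largest eigenvalue (K ≠ 0 since x ∉ ker K). Then τ⁺/(λmax(Ã) + τmax) ≤ λ ≤ λmax(Ã) + τmax. -/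
open Matrix

private lemma dot_sum_aux {k : ℕ} {A : Matrix (Fin k) (Fin k) ℝ} (hA : A.IsHermitian)
    (v w : Fin k → ℝ) :
    v ⬝ᵥ w = ∑ i, (⇑(hA.eigenvectorBasis i) ⬝ᵥ v) * (⇑(hA.eigenvectorBasis i) ⬝ᵥ w) := by
  have h : ∀ a b : EuclideanSpace ℝ (Fin k), inner ℝ a b = (a : Fin k → ℝ) ⬝ᵥ b := by
    intro a b
    simp [PiLp.inner_apply, RCLike.inner_apply, dotProduct, mul_comm]
  have := hA.eigenvectorBasis.sum_inner_mul_inner (WithLp.toLp 2 v : EuclideanSpace ℝ (Fin k))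
    (WithLp.toLp 2 w : EuclideanSpace ℝ (Fin k))
  simp only [h, WithLp.ofLp_toLp] at this
  rw [← this]
  exact Finset.sum_congr rfl fun i _ => by rw [dotProduct_comm v]

private lemma eig_dot {k : ℕ} {A : Matrix (Fin k) (Fin k) ℝ} (hA : A.IsHermitian)
    (v : Fin k → ℝ) (i : Fin k) :
    ⇑(hA.eigenvectorBasis i) ⬝ᵥ (A *ᵥ v)
      = hA.eigenvalues i * (⇑(hA.eigenvectorBasis i) ⬝ᵥ v) := by
  have ht : Aᵀ = A := by rw [← conjTranspose_eq_transpose_of_trivial, hA.eq]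
  rw [dotProduct_mulVec, ← mulVec_transpose, ht, hA.mulVec_eigenvectorBasis,
    smul_dotProduct, smul_eq_mul]

private lemma spectral_sums {k : ℕ} {A : Matrix (Fin k) (Fin k) ℝ} (hA : A.IsHermitian)
    (v : Fin k → ℝ) :
    ∃ c : Fin k → ℝ,
      (∀ i, c i = ⇑(hA.eigenvectorBasis i) ⬝ᵥ v) ∧
      v ⬝ᵥ v = ∑ i, c i ^ 2 ∧
      v ⬝ᵥ (A *ᵥ v) = ∑ i, hA.eigenvalues i * c i ^ 2 ∧
      (A *ᵥ v) ⬝ᵥ (A *ᵥ v) = ∑ i, hA.eigenvalues i ^ 2 * c i ^ 2 := by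
  refine ⟨fun i => ⇑(hA.eigenvectorBasis i) ⬝ᵥ v, fun i => rfl, ?_, ?_, ?_⟩
  · rw [dot_sum_aux hA v v]
    exact Finset.sum_congr rfl fun i _ => by ring
  · rw [dot_sum_aux hA v (A *ᵥ v)]
    exact Finset.sum_congr rfl fun i _ => by rw [eig_dot hA v i]; ring
  · rw [dot_sum_aux hA (A *ᵥ v) (A *ᵥ v)]
    exact Finset.sum_congr rfl fun i _ => by rw [eig_dot hA v i]; ring

set_option maxHeartbeats 2000000 in
/-- Real eigenvalues λ ∉ {0,1}, λ ∉ [λmin(Ã), λmax(Ã)], with real eigenvector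
(x; y; z) ≠ 0 such that x ∈ ker R and x ∉ ker K, satisfy
τ⁺/(λmax(Ã) + τmax) ≤ λ ≤ λmax(Ã) + τmax, where τ⁺ and τmax are the smallest
positive and the largest eigenvalue of KKᵀ. -/
theorem stmt_18
    (n m l : ℕ) (hn : 0 < n) (hm : 0 < m) (hl : 0 < l)
    (Atil : Matrix (Fin n) (Fin n) ℝ) (hA : Atil.PosDef)
    (R : Matrix (Fin m) (Fin n) ℝ) (K : Matrix (Fin l) (Fin n) ℝ)
    (lminA lmaxA : ℝ)
    (hlmin : IsLeast (Set.range hA.1.eigenvalues) lminA)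
    (hlmax : IsGreatest (Set.range hA.1.eigenvalues) lmaxA)
    (hKK : (K * Kᵀ).IsHermitian)
    (τplus τmax : ℝ)
    (hτplus : IsLeast {τ : ℝ | τ ∈ Set.range hKK.eigenvalues ∧ 0 < τ} τplus)
    (hτmax : IsGreatest (Set.range hKK.eigenvalues) τmax)
    (lam : ℝ) (hlam0 : lam ≠ 0) (hlam1 : lam ≠ 1)
    (hlamI : lam ∉ Set.Icc lminA lmaxA)
    (x : Fin n → ℝ) (y : Fin m → ℝ) (z : Fin l → ℝ)
    (hw : ¬(x = 0 ∧ y = 0 ∧ z = 0))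
    (h1 : Atil *ᵥ x + Rᵀ *ᵥ y + Kᵀ *ᵥ z = lam • (x + Rᵀ *ᵥ y + Kᵀ *ᵥ z))
    (h2 : R *ᵥ x = -(lam • y))
    (h3 : K *ᵥ x = -(lam • z))
    (hxR : R *ᵥ x = 0) (hxK : K *ᵥ x ≠ 0) :
    τplus / (lmaxA + τmax) ≤ lam ∧ lam ≤ lmaxA + τmax := by
  -- basic eigenvalue facts
  have hlminpos : 0 < lminA := by
    obtain ⟨i, hi⟩ := hlmin.1
    rw [← hi]; exact hA.eigenvalues_pos i
  have hlmle : lminA ≤ lmaxA := hlmax.2 hlmin.1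
  have hτppos : 0 < τplus := hτplus.1.2
  have hτple : τplus ≤ τmax := hτmax.2 hτplus.1.1
  have hτmaxpos : 0 < τmax := lt_of_lt_of_le hτppos hτple
  have hdenpos : 0 < lmaxA + τmax := by linarith
  -- y = 0
  have hy : y = 0 := by
    have h0 : -(lam • y) = 0 := by rw [← h2, hxR]
    rcases smul_eq_zero.mp (neg_eq_zero.mp h0) with h | h
    · exact absurd h hlam0
    · exact h
  -- z in terms of K x
  have hz : z = (-(1/lam)) • (K *ᵥ x) := by
    rw [h3, smul_neg, neg_smul, neg_neg, smul_smul, one_div, inv_mul_cancel₀ hlam0, one_smul]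
  -- key identity
  have key : Atil *ᵥ x = lam • x + ((1 - lam)/lam) • (Kᵀ *ᵥ (K *ᵥ x)) := by
    have h1' := h1
    rw [hy, mulVec_zero, add_zero] at h1'
    have hKz : Kᵀ *ᵥ z = (-(1/lam)) • (Kᵀ *ᵥ (K *ᵥ x)) := by rw [hz, mulVec_smul]
    rw [hKz, smul_add] at h1'
    funext i
    have hcomp := congrFun h1' i
    simp only [Pi.add_apply, Pi.smul_apply, smul_eq_mul] at hcomp ⊢
    field_simp at hcomp ⊢
    simp only [Pi.zero_apply, add_zero] at hcomp; linarith
  -- scalar identities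
  have hxw : x ⬝ᵥ (Kᵀ *ᵥ (K *ᵥ x)) = (K *ᵥ x) ⬝ᵥ (K *ᵥ x) := by
    rw [dotProduct_mulVec, vecMul_transpose]
  have hwx : (Kᵀ *ᵥ (K *ᵥ x)) ⬝ᵥ x = (K *ᵥ x) ⬝ᵥ (K *ᵥ x) := by
    rw [dotProduct_comm]; exact hxw
  have hA1 : x ⬝ᵥ (Atil *ᵥ x)
      = lam * (x ⬝ᵥ x) + ((1 - lam)/lam) * ((K *ᵥ x) ⬝ᵥ (K *ᵥ x)) := by
    rw [key, dotProduct_add, dotProduct_smul, dotProduct_smul, smul_eq_mul, smul_eq_mul, hxw]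
  have hA2 : (Atil *ᵥ x) ⬝ᵥ (Atil *ᵥ x)
      = lam^2 * (x ⬝ᵥ x) + 2*(1 - lam) * ((K *ᵥ x) ⬝ᵥ (K *ᵥ x))
        + ((1 - lam)/lam)^2 * ((Kᵀ *ᵥ (K *ᵥ x)) ⬝ᵥ (Kᵀ *ᵥ (K *ᵥ x))) := by
    rw [key]
    simp only [dotProduct_add, add_dotProduct, dotProduct_smul, smul_dotProduct,
      smul_eq_mul, hxw, hwx]
    field_simp
    ring
  have hdnn : ∀ {k : ℕ} (v : Fin k → ℝ), 0 ≤ v ⬝ᵥ v :=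
    fun v => Finset.sum_nonneg fun i _ => mul_self_nonneg _
  have hx0 : x ≠ 0 := fun h => hxK (by rw [h, mulVec_zero])
  have hXpos : 0 < x ⬝ᵥ x := by
    rcases lt_or_eq_of_le (hdnn x) with h | h
    · exact h
    · exact absurd (dotProduct_self_eq_zero.mp h.symm) hx0
  have hTpos : 0 < (K *ᵥ x) ⬝ᵥ (K *ᵥ x) := by
    rcases lt_or_eq_of_le (hdnn (K *ᵥ x)) with h | h
    · exact h
    · exact absurd (dotProduct_self_eq_zero.mp h.symm) hxK
  -- spectral facts for Atil
  obtain ⟨c, hcdef, hXs, hA1s, hA2s⟩ := spectral_sums hA.1 x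
  have hebd : ∀ i, lminA ≤ hA.1.eigenvalues i ∧ hA.1.eigenvalues i ≤ lmaxA :=
    fun i => ⟨hlmin.2 ⟨i, rfl⟩, hlmax.2 ⟨i, rfl⟩⟩
  have hF1a : lminA * (x ⬝ᵥ x) ≤ x ⬝ᵥ (Atil *ᵥ x) := by
    rw [hXs, hA1s, Finset.mul_sum]
    exact Finset.sum_le_sum fun i _ => mul_le_mul_of_nonneg_right (hebd i).1 (sq_nonneg _)
  have hF1b : x ⬝ᵥ (Atil *ᵥ x) ≤ lmaxA * (x ⬝ᵥ x) := by
    rw [hXs, hA1s, Finset.mul_sum]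
    exact Finset.sum_le_sum fun i _ => mul_le_mul_of_nonneg_right (hebd i).2 (sq_nonneg _)
  -- spectral facts for K * Kᵀ
  obtain ⟨c', hc'def, hTs, hSs', _⟩ := spectral_sums hKK (K *ᵥ x)
  have hSS : (K *ᵥ x) ⬝ᵥ ((K * Kᵀ) *ᵥ (K *ᵥ x))
      = (Kᵀ *ᵥ (K *ᵥ x)) ⬝ᵥ (Kᵀ *ᵥ (K *ᵥ x)) := by
    rw [← mulVec_mulVec, dotProduct_mulVec, ← mulVec_transpose]
  have hSs : (Kᵀ *ᵥ (K *ᵥ x)) ⬝ᵥ (Kᵀ *ᵥ (K *ᵥ x)) = ∑ i, hKK.eigenvalues i * c' i ^ 2 := by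
    rw [← hSS, hSs']
  have hτnn : ∀ i, 0 ≤ hKK.eigenvalues i := by
    have hpsd : (K * Kᵀ).PosSemidef := by
      have := posSemidef_self_mul_conjTranspose K
      rwa [conjTranspose_eq_transpose_of_trivial] at this
    exact fun i => hpsd.eigenvalues_nonneg i
  have hzero : ∀ i, hKK.eigenvalues i = 0 → c' i = 0 := by
    intro i h0
    have hb := hKK.mulVec_eigenvectorBasis i
    rw [h0, zero_smul] at hb
    have h2' : (Kᵀ *ᵥ ⇑(hKK.eigenvectorBasis i)) ⬝ᵥ (Kᵀ *ᵥ ⇑(hKK.eigenvectorBasis i)) = 0 := by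
      rw [dotProduct_mulVec, ← mulVec_transpose, transpose_transpose, mulVec_mulVec, hb,
        zero_dotProduct]
    have h3' : Kᵀ *ᵥ ⇑(hKK.eigenvectorBasis i) = 0 := dotProduct_self_eq_zero.mp h2'
    rw [hc'def, dotProduct_mulVec, ← mulVec_transpose, h3', zero_dotProduct]
  have hF3a : τplus * ((K *ᵥ x) ⬝ᵥ (K *ᵥ x)) ≤ (Kᵀ *ᵥ (K *ᵥ x)) ⬝ᵥ (Kᵀ *ᵥ (K *ᵥ x)) := by
    rw [hSs, hTs, Finset.mul_sum]
    refine Finset.sum_le_sum fun i _ => ?_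
    rcases eq_or_lt_of_le (hτnn i) with h | h
    · rw [← h, hzero i h.symm]; simp
    · exact mul_le_mul_of_nonneg_right (hτplus.2 ⟨⟨i, rfl⟩, h⟩) (sq_nonneg _)
  have hF3b : (Kᵀ *ᵥ (K *ᵥ x)) ⬝ᵥ (Kᵀ *ᵥ (K *ᵥ x)) ≤ τmax * ((K *ᵥ x) ⬝ᵥ (K *ᵥ x)) := by
    rw [hSs, hTs, Finset.mul_sum]
    exact Finset.sum_le_sum fun i _ => mul_le_mul_of_nonneg_right (hτmax.2 ⟨i, rfl⟩) (sq_nonneg _)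
  have hSpos : 0 < (Kᵀ *ᵥ (K *ᵥ x)) ⬝ᵥ (Kᵀ *ᵥ (K *ᵥ x)) :=
    lt_of_lt_of_le (mul_pos hτppos hTpos) hF3a
  -- Cauchy-Schwarz : T^2 ≤ X * S
  have hCS : ((K *ᵥ x) ⬝ᵥ (K *ᵥ x))^2
      ≤ (x ⬝ᵥ x) * ((Kᵀ *ᵥ (K *ᵥ x)) ⬝ᵥ (Kᵀ *ᵥ (K *ᵥ x))) := by
    have h := Finset.sum_mul_sq_le_sq_mul_sq Finset.univ x (Kᵀ *ᵥ (K *ᵥ x))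
    have e1 : x ⬝ᵥ (Kᵀ *ᵥ (K *ᵥ x)) = ∑ i, x i * (Kᵀ *ᵥ (K *ᵥ x)) i := rfl
    have e2 : x ⬝ᵥ x = ∑ i, x i ^ 2 := by simp [dotProduct, sq]
    have e3 : (Kᵀ *ᵥ (K *ᵥ x)) ⬝ᵥ (Kᵀ *ᵥ (K *ᵥ x)) = ∑ i, (Kᵀ *ᵥ (K *ᵥ x)) i ^ 2 := by
      simp [dotProduct, sq]
    rw [← hxw, e1, e2, e3]
    exact h
  -- abbreviate (opaque scalars)
  obtain ⟨X, hXeq⟩ : ∃ r, x ⬝ᵥ x = r := ⟨_, rfl⟩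
  obtain ⟨T, hTeq⟩ : ∃ r, (K *ᵥ x) ⬝ᵥ (K *ᵥ x) = r := ⟨_, rfl⟩
  obtain ⟨S, hSeq⟩ : ∃ r, (Kᵀ *ᵥ (K *ᵥ x)) ⬝ᵥ (Kᵀ *ᵥ (K *ᵥ x)) = r := ⟨_, rfl⟩
  rw [hXeq] at hXpos hXs hF1a hF1b hCS hA1 hA2
  rw [hTeq] at hTpos hTs hCS hF3a hF3b hA1 hA2
  rw [hSeq] at hSpos hSs hCS hF3a hF3b hA2
  obtain ⟨A1, hA1eq⟩ : ∃ r, x ⬝ᵥ (Atil *ᵥ x) = r := ⟨_, rfl⟩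
  obtain ⟨A2, hA2eq⟩ : ∃ r, (Atil *ᵥ x) ⬝ᵥ (Atil *ᵥ x) = r := ⟨_, rfl⟩
  rw [hA1eq] at hA1 hA1s hF1a hF1b
  rw [hA2eq] at hA2 hA2s
  have hTX : T ≤ τmax * X := by
    have hXS : X * S ≤ X * (τmax * T) := mul_le_mul_of_nonneg_left hF3b hXpos.le
    have hTT : T * T ≤ (τmax * X) * T := by
      have h0 : T * T ≤ X * S := by rw [← sq]; exact hCS
      calc T * T ≤ X * S := h0
        _ ≤ X * (τmax * T) := hXS
        _ = (τmax * X) * T := by ring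
    exact le_of_mul_le_mul_right hTT hTpos
  -- key scalar equation
  have hk1 : lam * A1 = lam^2 * X + (1 - lam) * T := by
    rw [hA1]; field_simp
  -- positivity of lam
  have hlampos : 0 < lam := by
    rcases lt_or_gt_of_ne hlam0 with h | h
    · exfalso
      have e1 : lam * A1 ≤ lam * (lminA * X) :=
        mul_le_mul_of_nonpos_left hF1a (le_of_lt h)
      have e2 : lam * (lminA * X) < 0 := mul_neg_of_neg_of_pos h (mul_pos hlminpos hXpos)
      have hsq : 0 < lam^2 := by rw [sq]; exact mul_pos_of_neg_of_neg h h
      have e3 : 0 < lam^2 * X := mul_pos hsq hXpos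
      have e4 : 0 < (1 - lam) * T := mul_pos (by linarith) hTpos
      linarith
    · exact h
  -- upper bound
  have hup : lam ≤ lmaxA + τmax := by
    have e5 : lam * (lam * X - A1 - T) = -T := by linear_combination -hk1
    have e6 : lam * X - A1 - T < 0 := by
      by_contra h
      push_neg at h
      have := mul_nonneg hlampos.le h
      rw [e5] at this
      linarith
    have e7 : lam * X < (lmaxA + τmax) * X := by
      have : (lmaxA + τmax) * X = lmaxA * X + τmax * X := by ring
      linarith [e6, hF1b, hTX]
    exact le_of_lt (lt_of_mul_lt_mul_right e7 hXpos.le)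
  refine ⟨?_, hup⟩
  -- generic expansion and reduction
  have expandGen : ∀ μ : ℝ,
      ∑ i, (hA.1.eigenvalues i - lam) * (hA.1.eigenvalues i - μ) * c i ^ 2
        = A2 - (lam + μ) * A1 + lam * μ * X := by
    intro μ
    rw [hA2s, hA1s, hXs, Finset.mul_sum, Finset.mul_sum, ← Finset.sum_sub_distrib,
      ← Finset.sum_add_distrib]
    exact Finset.sum_congr rfl fun i _ => by ring
  have redGen : ∀ μ : ℝ, lam^2 * (A2 - (lam + μ) * A1 + lam * μ * X)
      = (1 - lam) * (lam * (lam - μ) * T) + (1 - lam)^2 * S := by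
    intro μ
    rw [hA1, hA2]; field_simp; ring
  -- case split
  simp only [Set.mem_Icc, not_and, not_le] at hlamI
  rw [div_le_iff₀ hdenpos]
  by_cases hcase : lminA ≤ lam
  · -- lam > lmaxA
    have hgt : lmaxA < lam := hlamI hcase
    have ineqB : ∑ i, (hA.1.eigenvalues i - lam) * (hA.1.eigenvalues i - lminA) * c i ^ 2 ≤ 0 := by
      refine Finset.sum_nonpos fun i _ => ?_
      have h1' : hA.1.eigenvalues i - lam ≤ 0 := by linarith [(hebd i).2]
      have h2' : 0 ≤ hA.1.eigenvalues i - lminA := by linarith [(hebd i).1]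
      exact mul_nonpos_of_nonpos_of_nonneg
        (mul_nonpos_of_nonpos_of_nonneg h1' h2') (sq_nonneg _)
    have hq : A2 - (lam + lminA) * A1 + lam * lminA * X ≤ 0 := (expandGen lminA) ▸ ineqB
    have hRHS : (1 - lam) * (lam * (lam - lminA) * T) + (1 - lam)^2 * S ≤ 0 := by
      rw [← redGen lminA]
      simpa using mul_le_mul_of_nonneg_left hq (sq_nonneg lam)
    have hlamgt1 : 1 < lam := by
      rcases lt_or_gt_of_ne hlam1 with h | h
      · exfalso
        have p1 : (0:ℝ) < 1 - lam := by linarith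
        have p2 : 0 < lam * (lam - lminA) * T :=
          mul_pos (mul_pos hlampos (by linarith)) hTpos
        have p3 : 0 < (1 - lam)^2 * S :=
          mul_pos (by rw [sq]; exact mul_pos p1 p1) hSpos
        linarith [mul_pos p1 p2, p3, hRHS]
      · exact h
    have hprod : 0 ≤ (lam - 1) * (lmaxA + τmax) :=
      mul_nonneg (by linarith) hdenpos.le
    linarith [hprod, hτple, hlminpos, hlmle]
  · -- lam < lminA
    push_neg at hcase
    have ineqA : ∑ i, (hA.1.eigenvalues i - lam) * (hA.1.eigenvalues i - lmaxA) * c i ^ 2 ≤ 0 := by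
      refine Finset.sum_nonpos fun i _ => ?_
      have h1' : 0 ≤ hA.1.eigenvalues i - lam := by linarith [(hebd i).1]
      have h2' : hA.1.eigenvalues i - lmaxA ≤ 0 := by linarith [(hebd i).2]
      have hab : (hA.1.eigenvalues i - lam) * (hA.1.eigenvalues i - lmaxA) ≤ 0 :=
        mul_nonpos_iff.mpr (Or.inl ⟨h1', h2'⟩)
      exact mul_nonpos_of_nonpos_of_nonneg hab (sq_nonneg _)
    have hq2 : A2 - (lam + lmaxA) * A1 + lam * lmaxA * X ≤ 0 := (expandGen lmaxA) ▸ ineqA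
    have hRHS2 : (1 - lam) * (lam * (lam - lmaxA) * T) + (1 - lam)^2 * S ≤ 0 := by
      rw [← redGen lmaxA]
      simpa using mul_le_mul_of_nonneg_left hq2 (sq_nonneg lam)
    have hlamlt1 : lam < 1 := by
      rcases lt_or_gt_of_ne hlam1 with h | h
      · exact h
      · exfalso
        have p1 : lam - 1 > (0:ℝ) := by linarith
        have p2 : 0 < lam * (lmaxA - lam) * T :=
          mul_pos (mul_pos hlampos (by linarith)) hTpos
        have p3 : 0 < (1 - lam)^2 * S :=
          mul_pos (by rw [sq]; exact mul_pos_of_neg_of_neg (by linarith) (by linarith)) hSpos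
        linarith [mul_pos p1 p2, p3, hRHS2]
    have h1l : (0:ℝ) < 1 - lam := by linarith
    have step1 : (1 - lam) * S ≤ lam * (lmaxA - lam) * T := by
      have h' : (1 - lam) * ((1 - lam) * S) ≤ (1 - lam) * (lam * (lmaxA - lam) * T) := by
        linarith [hRHS2]
      exact (mul_le_mul_iff_right₀ h1l).mp h' 
    have step2 : (1 - lam) * (τplus * T) ≤ (1 - lam) * S :=
      mul_le_mul_of_nonneg_left hF3a (le_of_lt h1l)
    have step3 : (1 - lam) * τplus ≤ lam * (lmaxA - lam) := by
      have h'' : ((1 - lam) * τplus) * T ≤ (lam * (lmaxA - lam)) * T := by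
        linarith [step1, step2]
      exact le_of_mul_le_mul_right h'' hTpos
    have hint1 : 0 ≤ lam * (τmax - τplus) :=
      mul_nonneg hlampos.le (by linarith)
    linarith [step3, hint1, sq_nonneg lam]
end

section
/- λ = 1 is an eigenvalue of the generalized eigenvalue problem 𝒯 w = λ 𝒩 w if and only if 1 is an eigenvalue of Ã. Moreover, every eigenvector w = (x; y; z) for λ = 1 satisfies x ≠ 0, Ãx = x, y = −Rx, and z = −Kx; conversely, if Ãx = x with x ≠ 0, then (x; −Rx; −Kx) is an eigenvector for λ = 1. -/
open Matrix

/-- λ = 1 is an eigenvalue of the generalized eigenvalue problem 𝒯w = λ𝒩w if and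
only if 1 is an eigenvalue of Ã. Moreover, every eigenvector w = (x; y; z) for
λ = 1 satisfies x ≠ 0, Ãx = x, y = −Rx, and z = −Kx; conversely, if Ãx = x with
x ≠ 0, then (x; −Rx; −Kx) is an eigenvector for λ = 1. -/
theorem stmt_19
    (n m l : ℕ) (hn : 0 < n) (hm : 0 < m) (hl : 0 < l)
    (Atil : Matrix (Fin n) (Fin n) ℝ) (hA : Atil.PosDef)
    (R : Matrix (Fin m) (Fin n) ℝ) (K : Matrix (Fin l) (Fin n) ℝ) :
    ((∃ (x : Fin n → ℝ) (y : Fin m → ℝ) (z : Fin l → ℝ),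
        ¬(x = 0 ∧ y = 0 ∧ z = 0) ∧
        Atil *ᵥ x + Rᵀ *ᵥ y + Kᵀ *ᵥ z = (1 : ℝ) • (x + Rᵀ *ᵥ y + Kᵀ *ᵥ z) ∧
        R *ᵥ x = -((1 : ℝ) • y) ∧
        K *ᵥ x = -((1 : ℝ) • z))
      ↔ (∃ x : Fin n → ℝ, x ≠ 0 ∧ Atil *ᵥ x = x)) ∧
    (∀ (x : Fin n → ℝ) (y : Fin m → ℝ) (z : Fin l → ℝ),
        ¬(x = 0 ∧ y = 0 ∧ z = 0) →
        Atil *ᵥ x + Rᵀ *ᵥ y + Kᵀ *ᵥ z = (1 : ℝ) • (x + Rᵀ *ᵥ y + Kᵀ *ᵥ z) →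
        R *ᵥ x = -((1 : ℝ) • y) →
        K *ᵥ x = -((1 : ℝ) • z) →
        x ≠ 0 ∧ Atil *ᵥ x = x ∧ y = -(R *ᵥ x) ∧ z = -(K *ᵥ x)) ∧
    (∀ x : Fin n → ℝ, x ≠ 0 → Atil *ᵥ x = x →
        ¬(x = 0 ∧ -(R *ᵥ x) = 0 ∧ -(K *ᵥ x) = 0) ∧
        Atil *ᵥ x + Rᵀ *ᵥ (-(R *ᵥ x)) + Kᵀ *ᵥ (-(K *ᵥ x))
          = (1 : ℝ) • (x + Rᵀ *ᵥ (-(R *ᵥ x)) + Kᵀ *ᵥ (-(K *ᵥ x))) ∧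
        R *ᵥ x = -((1 : ℝ) • (-(R *ᵥ x))) ∧
        K *ᵥ x = -((1 : ℝ) • (-(K *ᵥ x)))) := by
  have key : ∀ (x : Fin n → ℝ) (y : Fin m → ℝ) (z : Fin l → ℝ),
      ¬(x = 0 ∧ y = 0 ∧ z = 0) →
      Atil *ᵥ x + Rᵀ *ᵥ y + Kᵀ *ᵥ z = (1 : ℝ) • (x + Rᵀ *ᵥ y + Kᵀ *ᵥ z) →
      R *ᵥ x = -((1 : ℝ) • y) →
      K *ᵥ x = -((1 : ℝ) • z) →
      x ≠ 0 ∧ Atil *ᵥ x = x ∧ y = -(R *ᵥ x) ∧ z = -(K *ᵥ x) := by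
    intro x y z hnz h1 h2 h3
    rw [one_smul] at h1 h2 h3
    have hAx : Atil *ᵥ x = x := by
      have := h1
      rw [add_assoc, add_assoc] at this
      exact add_right_cancel this
    have hy : y = -(R *ᵥ x) := by rw [h2]; simp
    have hz : z = -(K *ᵥ x) := by rw [h3]; simp
    refine ⟨fun hx => hnz ⟨hx, ?_, ?_⟩, hAx, hy, hz⟩
    · simp [hy, hx]
    · simp [hz, hx]
  refine ⟨⟨fun ⟨x, y, z, hnz, h1, h2, h3⟩ => ?_, fun ⟨x, hx, hAx⟩ => ?_⟩, key, ?_⟩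
  · obtain ⟨hx, hAx, _, _⟩ := key x y z hnz h1 h2 h3
    exact ⟨x, hx, hAx⟩
  · exact ⟨x, -(R *ᵥ x), -(K *ᵥ x), fun h => hx h.1, by rw [one_smul, hAx], by simp, by simp⟩
  · intro x hx hAx
    exact ⟨fun h => hx h.1, by rw [one_smul, hAx], by simp, by simp⟩
end
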